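/- arXiv:1604.06894 — 4 statements merged into one kernel-verified Lean document; each statement's English description precedes it below -/
import Mathlib

section
/- Fix integers n ≥ 2 and k ≥ 2, and let α = (α_1,…,α_k) and β = (β_1,…,β_k) be weak compositions (tuples of nonnegative integers) with α_1+⋯+α_k+β_1+⋯+β_k = n−1. Then the number of injective functions g : {1,…,n−1} → {1,…,n}×{1,…,k} having exactly α_j j-excedances and exactly β_j j-subcedances for every 1 ≤ j ≤ k equals the number of labeled rooted plane k-ary trees on n nodes having exactly α_j j-descents and exactly β_j j-ascents for every 1 ≤ j ≤ k. -/
/-!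
Both sides are parent maps `V → Option (V × C)` on a finite linear order `V`: an injection `g`
makes `g i` the parent of `i` and leaves the top vertex `⊤` parentless, and a plane tree is a
parent map whose unique parentless vertex `r` is reached from every vertex. Call `v` an orbit
maximum if it exceeds every vertex on its forward orbit under the parent map.

The functional graph of `g` is a tree hanging from `⊤` together with cycles carrying trees. Let
`t₁ < ⋯ < tₚ = ⊤` be the orbit maxima lying on cycles (`⊤` is a fixed point). Giving each `tᵢ`
the parent edge of `tᵢ₋₁`, and none to `t₁`, opens every cycle at its maximum and chains the
pieces into a single path `⊤ → ⋯ → t₁`, so the result is a tree rooted at `t₁`. In this tree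
the `tᵢ` are exactly the orbit maxima on the path from `⊤` to the root; hence the tree
determines them and the surgery can be undone. A moved edge leaves `tᵢ₋₁` for a vertex
`≤ tᵢ₋₁ < tᵢ`, so it is a subcedance before and an ascent after the move, with the same colour:
the surgery only permutes the edge labels.
-/

/-- A labeled rooted plane `k`-ary tree on `n` nodes (labels `Fin n`,
standing for `{1,…,n}`): a root `r` together with an injective map `par`
assigning to each non-root vertex `v` a pair `(p, i)` meaning that `v` is the
`i`-th child of `p`, such that from every vertex, iterating the parent map
eventually reaches the root. -/
structure PlaneTree (n k : ℕ) where
  root : Fin n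
  par : {v : Fin n // v ≠ root} → Fin n × Fin k
  par_inj : Function.Injective par
  reach : ∀ v : Fin n, ∃ m : ℕ,
    (fun u : Fin n => if h : u = root then root else (par ⟨u, h⟩).1)^[m] v = root

/-- `v` is a `j`-descent of `T` (indices `j : Fin k` correspond to the
1-based child positions `j + 1`). -/
def PlaneTree.IsDesc {n k : ℕ} (T : PlaneTree n k) (j : Fin k)
    (v : {v : Fin n // v ≠ T.root}) : Prop :=
  (T.par v).2 = j ∧ v.1 < (T.par v).1

/-- `v` is a `j`-ascent of `T`. -/
def PlaneTree.IsAsc {n k : ℕ} (T : PlaneTree n k) (j : Fin k)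
    (v : {v : Fin n // v ≠ T.root}) : Prop :=
  (T.par v).2 = j ∧ (T.par v).1 < v.1

open Set

namespace Function

section Iterate
variable {V : Type*} {s s' : V → V} {S : Set V} {v : V}

theorem exists_iterate_iterate_eq_of_mem_periodicPts (hv : v ∈ periodicPts s) (i : ℕ) :
    ∃ j, s^[j] (s^[i] v) = v := by
  obtain ⟨p, hp, hper⟩ := hv
  refine ⟨p * i - i, ?_⟩
  rw [← iterate_add_apply, Nat.sub_add_cancel (Nat.le_mul_of_pos_left i hp)]
  exact (hper.mul_const i).eq

theorem eq_of_mem_periodicPts_of_iterate_eq {r : V} (hr : IsFixedPt s r)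
    (hv : v ∈ periodicPts s) {n : ℕ} (hn : s^[n] v = r) : v = r := by
  obtain ⟨j, hj⟩ := exists_iterate_iterate_eq_of_mem_periodicPts hv n
  rwa [hn, (hr.iterate j).eq, eq_comm] at hj

theorem exists_iterate_mem_periodicPts [Finite V] (s : V → V) (v : V) :
    ∃ n, s^[n] v ∈ periodicPts s := by
  obtain ⟨a, b, hab, heq⟩ := Finite.exists_ne_map_eq_of_infinite (s^[·] v)
  wlog hlt : a < b generalizing a b
  · exact this b a hab.symm heq.symm (lt_of_le_of_ne (not_lt.1 hlt) hab.symm)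
  refine ⟨a, b - a, Nat.sub_pos_of_lt hlt, ?_⟩
  rw [IsPeriodicPt, IsFixedPt, ← iterate_add_apply, Nat.sub_add_cancel hlt.le]
  exact heq.symm

theorem iterate_eq_of_eqOn_compl (h : EqOn s' s Sᶜ) {n : ℕ}
    (hv : ∀ i < n, s^[i] v ∉ S) : s'^[n] v = s^[n] v := by
  induction n with
  | zero => rfl
  | succ n ih =>
    rw [iterate_succ_apply', iterate_succ_apply', ih fun i hi => hv i (by omega),
      h (hv n n.lt_succ_self)]

theorem exists_iterate_eq_or_exists_iterate_eq {u x y : V} {a b : ℕ} (ha : s^[a] u = x)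
    (hb : s^[b] u = y) : (∃ n, s^[n] x = y) ∨ ∃ n, s^[n] y = x := by
  rcases le_total a b with hab | hab
  · exact .inl ⟨b - a, by rw [← ha, ← iterate_add_apply, Nat.sub_add_cancel hab, hb]⟩
  · exact .inr ⟨a - b, by rw [← hb, ← iterate_add_apply, Nat.sub_add_cancel hab, ha]⟩

end Iterate

section OrbitMax
variable {V : Type*} [LinearOrder V] {s s' : V → V} {S : Set V} {v : V}

def IsOrbitMax (s : V → V) (v : V) : Prop := ∀ n, s^[n] v ≤ v

theorem isOrbitMax_top [OrderTop V] (s : V → V) : IsOrbitMax s ⊤ := fun _ => le_top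

theorem IsFixedPt.isOrbitMax (h : IsFixedPt s v) : IsOrbitMax s v :=
  fun n => (h.iterate n).eq.le

theorem isOrbitMax_iterate_of_forall_le {t : ℕ} (h : ∀ i, s^[i] v ≤ s^[t] v) :
    IsOrbitMax s (s^[t] v) :=
  fun i => by rw [← iterate_add_apply]; exact h _

theorem IsPeriodicPt.isOrbitMax {p : ℕ} (hp : IsPeriodicPt s p v) (hpos : 0 < p)
    (h : ∀ i < p, s^[i] v ≤ v) : IsOrbitMax s v :=
  fun n => hp.iterate_mod_apply n ▸ h _ (Nat.mod_lt n hpos)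

theorem IsOrbitMax.iterate_eq_of_mem_periodicPts (hv : IsOrbitMax s v) (hper : v ∈ periodicPts s)
    {i : ℕ} (hi : IsOrbitMax s (s^[i] v)) : s^[i] v = v := by
  obtain ⟨j, hj⟩ := exists_iterate_iterate_eq_of_mem_periodicPts hper i
  have hvi := hi j
  rw [hj] at hvi
  exact le_antisymm (hv i) hvi

theorem exists_iterate_first_isOrbitMax [Finite V] (s : V → V) (v : V) :
    ∃ t, (∀ i, s^[i] v ≤ s^[t] v) ∧ ∀ i < t, ¬IsOrbitMax s (s^[i] v) := by
  classical
  obtain ⟨_, ⟨n, rfl⟩, hn⟩ := Set.exists_max_image (range (s^[·] v)) id (Set.toFinite _)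
    (range_nonempty _)
  have hmax : ∀ i, s^[i] v ≤ s^[n] v := fun i => hn _ ⟨i, rfl⟩
  have hex : ∃ t, IsOrbitMax s (s^[t] v) := ⟨n, isOrbitMax_iterate_of_forall_le hmax⟩
  refine ⟨Nat.find hex, fun i => (hmax i).trans ?_, fun i => Nat.find_min hex⟩
  have htn : Nat.find hex ≤ n := Nat.find_min' hex (isOrbitMax_iterate_of_forall_le hmax)
  rw [← Nat.sub_add_cancel htn, iterate_add_apply]
  exact Nat.find_spec hex _

theorem exists_iterate_max_of_eqOn_compl [Finite V] (hS : ∀ x ∈ S, IsOrbitMax s x)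
    (h : EqOn s' s Sᶜ) (v : V) :
    ∃ t, (∀ i, s^[i] v ≤ s^[t] v) ∧ ∀ n ≤ t, s'^[n] v = s^[n] v := by
  obtain ⟨t, hmax, hfirst⟩ := exists_iterate_first_isOrbitMax s v
  exact ⟨t, hmax, fun n hn => iterate_eq_of_eqOn_compl h fun i hi hS' =>
    hfirst i (by omega) (hS _ hS')⟩

theorem IsOrbitMax.of_eqOn_compl [Finite V] (hS : ∀ x ∈ S, IsOrbitMax s x)
    (h : EqOn s' s Sᶜ) (hv : IsOrbitMax s' v) : IsOrbitMax s v := by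
  obtain ⟨t, hmax, heq⟩ := exists_iterate_max_of_eqOn_compl hS h v
  have hvt : s^[t] v = v := le_antisymm (heq t le_rfl ▸ hv t) (hmax 0)
  exact hvt ▸ isOrbitMax_iterate_of_forall_le hmax

end OrbitMax

end Function

open Function

namespace Finset
variable {V : Type*} [LinearOrder V]

/-- The cyclic permutation of `s` sending each element to the next larger one and the largest
one to the smallest; it fixes every point outside `s`. -/
def cyclicShift (s : Finset V) : Equiv.Perm V :=
  (finRotate #s).extendDomain (s.orderIsoOfFin rfl).toEquiv

variable {s : Finset V} {x z : V}

theorem cyclicShift_apply_of_notMem (hx : x ∉ s) : s.cyclicShift x = x :=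
  Equiv.Perm.extendDomain_apply_not_subtype _ _ hx

theorem cyclicShift_symm_apply_of_notMem (hx : x ∉ s) : s.cyclicShift.symm x = x :=
  s.cyclicShift.symm_apply_eq.2 (cyclicShift_apply_of_notMem hx).symm

theorem cyclicShift_mem_iff : s.cyclicShift x ∈ s ↔ x ∈ s := by
  by_cases hx : x ∈ s
  · simp only [hx, cyclicShift, Equiv.Perm.extendDomain_apply_subtype _ _ hx, Finset.coe_mem]
  · rw [cyclicShift_apply_of_notMem hx]

theorem cyclicShift_symm_mem_iff : s.cyclicShift.symm x ∈ s ↔ x ∈ s := by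
  rw [← cyclicShift_mem_iff, Equiv.apply_symm_apply]

theorem cyclicShift_mem_Ioc (hx : x ∈ s) (hz : z ∈ s) (hxz : x < z) :
    s.cyclicShift x ∈ Set.Ioc x z := by
  suffices ∀ {n} (e : Fin n ≃o s), (finRotate n).extendDomain e.toEquiv x ∈ Set.Ioc x z from
    this _
  intro n e
  obtain ⟨i, hi⟩ := e.surjective ⟨x, hx⟩
  obtain ⟨j, hj⟩ := e.surjective ⟨z, hz⟩
  have hij : i < j := by rw [← e.lt_iff_lt, hi, hj]; exact hxz
  obtain _ | n := n
  · exact i.elim0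
  have hshift : (finRotate (n + 1)).extendDomain e.toEquiv x = e (i + 1) := by
    rw [Equiv.Perm.extendDomain_apply_subtype _ _ hx, ← hi]
    simp
  have hx' : x = e i := by rw [hi]
  have hz' : z = e j := by rw [hj]
  rw [hshift, Set.mem_Ioc, hx', hz', Subtype.coe_lt_coe, Subtype.coe_le_coe, e.lt_iff_lt,
    e.le_iff_le]
  exact ⟨Fin.lt_add_one_iff.2 (hij.trans_le (Fin.le_last j)), Fin.add_one_le_of_lt hij⟩

end Finset

/-- `f v = some (p, j)` says that `v` is the `j`-th child of `p`; `f v = none` that `v` has no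
parent. -/
abbrev ParentMap (V C : Type*) := V → Option (V × C)

namespace ParentMap
variable {V C : Type*}

/-- The parent of `v`, with a parentless vertex taken as its own parent. -/
def next (f : ParentMap V C) (v : V) : V := ((f v).map Prod.fst).getD v

def IsRootedAt (f : ParentMap V C) (r : V) : Prop := ∀ v, f v = none ↔ v = r

def IsTreeAt (f : ParentMap V C) (r : V) : Prop := f.IsRootedAt r ∧ ∀ v, ∃ n, f.next^[n] v = r

/-- The kind of the edge leaving `v`: its colour, and whether it points to a larger vertex. -/
def label [LinearOrder V] (f : ParentMap V C) (v : V) : Option (C × Bool) :=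
  (f v).map fun q => (q.2, decide (v < q.1))

variable {f : ParentMap V C} {r v : V}

theorem next_of_eq_none (h : f v = none) : f.next v = v := by simp [next, h]

theorem next_of_eq_some {q : V × C} (h : f v = some q) : f.next v = q.1 := by simp [next, h]

theorem next_comp_of_ne_none (π : Equiv.Perm V) (h : f (π v) ≠ none) :
    next (f ∘ π) v = f.next (π v) := by
  obtain ⟨q, hq⟩ := Option.ne_none_iff_exists'.1 h
  rw [next_of_eq_some (f := f ∘ π) hq, next_of_eq_some hq]

theorem next_comp_of_apply_eq (π : Equiv.Perm V) (h : π v = v) : next (f ∘ π) v = f.next v := by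
  simp [next, h]

theorem IsRootedAt.comp (hf : f.IsRootedAt r) (π : Equiv.Perm V) :
    IsRootedAt (f ∘ π) (π.symm r) := fun v => by
  rw [Function.comp_apply, hf, π.eq_symm_apply]

theorem IsRootedAt.ne_of_label_eq_some [LinearOrder V] (hf : f.IsRootedAt r) {ℓ : C × Bool}
    (h : f.label v = some ℓ) : v ≠ r := fun hv => by
  simp [label, (hf v).2 hv] at h

theorem IsRootedAt.isFixedPt_next (hf : f.IsRootedAt r) : IsFixedPt f.next r :=
  next_of_eq_none ((hf r).2 rfl)

theorem IsTreeAt.eq_of_mem_periodicPts (hf : f.IsTreeAt r) (hv : v ∈ periodicPts f.next) :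
    v = r :=
  have ⟨_, hn⟩ := hf.2 v
  eq_of_mem_periodicPts_of_iterate_eq hf.1.isFixedPt_next hv hn

end ParentMap

namespace ParentMap
open Finset
variable {V C : Type*} [LinearOrder V] [Finite V] {f g : ParentMap V C} {r v w x : V}

noncomputable def cycleLeaders (f : ParentMap V C) : Finset V :=
  (Set.toFinite {v | v ∈ periodicPts f.next ∧ IsOrbitMax f.next v}).toFinset

theorem mem_cycleLeaders : v ∈ f.cycleLeaders ↔ v ∈ periodicPts f.next ∧ IsOrbitMax f.next v :=
  Set.Finite.mem_toFinset _

noncomputable def toTree (f : ParentMap V C) : ParentMap V C := f ∘ f.cycleLeaders.cyclicShift.symm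

theorem eqOn_next_toTree : EqOn f.toTree.next f.next (f.cycleLeaders : Set V)ᶜ := fun _ hx =>
  next_comp_of_apply_eq _ (cyclicShift_symm_apply_of_notMem hx)

theorem exists_iterate_next_toTree_eq (hw : w ∈ f.cycleLeaders) :
    ∃ t, f.toTree.next^[t] (f.next w) = w := by
  obtain ⟨hper, hmax⟩ := mem_cycleLeaders.1 hw
  obtain ⟨t, hle, heq⟩ := exists_iterate_max_of_eqOn_compl
    (fun x hx => (mem_cycleLeaders.1 hx).2) eqOn_next_toTree (f.next w)
  refine ⟨t, (heq t le_rfl).trans ?_⟩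
  rw [← iterate_succ_apply]
  refine hmax.iterate_eq_of_mem_periodicPts hper ?_
  rw [iterate_succ_apply]
  exact isOrbitMax_iterate_of_forall_le hle

variable [OrderTop V]

noncomputable def pathLeaders (f : ParentMap V C) : Finset V :=
  (Set.toFinite {v | (∃ n, f.next^[n] ⊤ = v) ∧ IsOrbitMax f.next v}).toFinset

theorem mem_pathLeaders : v ∈ f.pathLeaders ↔ (∃ n, f.next^[n] ⊤ = v) ∧ IsOrbitMax f.next v :=
  Set.Finite.mem_toFinset _

noncomputable def ofTree (f : ParentMap V C) : ParentMap V C := f ∘ f.pathLeaders.cyclicShift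

theorem eqOn_next_ofTree : EqOn g.ofTree.next g.next (g.pathLeaders : Set V)ᶜ := fun _ hx =>
  next_comp_of_apply_eq _ (cyclicShift_apply_of_notMem hx)

theorem top_mem_cycleLeaders (hf : f.IsRootedAt ⊤) : ⊤ ∈ f.cycleLeaders :=
  mem_cycleLeaders.2 ⟨mk_mem_periodicPts one_pos (hf.isFixedPt_next.isPeriodicPt 1),
    isOrbitMax_top _⟩

theorem isRootedAt_toTree (hf : f.IsRootedAt ⊤) :
    f.toTree.IsRootedAt (f.cycleLeaders.cyclicShift ⊤) := by
  have := hf.comp f.cycleLeaders.cyclicShift.symm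
  rwa [Equiv.symm_symm] at this

theorem next_toTree_of_mem (hf : f.IsRootedAt ⊤) (hx : x ∈ f.cycleLeaders)
    (hxr : x ≠ f.cycleLeaders.cyclicShift ⊤) :
    f.cycleLeaders.cyclicShift.symm x ∈ f.cycleLeaders ∧ f.cycleLeaders.cyclicShift.symm x < x ∧
      f.toTree.next x = f.next (f.cycleLeaders.cyclicShift.symm x) := by
  have hw := cyclicShift_symm_mem_iff.2 hx
  have hwtop : f.cycleLeaders.cyclicShift.symm x ≠ ⊤ := fun h => hxr (Equiv.symm_apply_eq _ |>.1 h)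
  refine ⟨hw, ?_, next_comp_of_ne_none _ ((hf _).not.2 hwtop)⟩
  have := (cyclicShift_mem_Ioc hw (top_mem_cycleLeaders hf) (lt_top_iff_ne_top.2 hwtop)).1
  rwa [Equiv.apply_symm_apply] at this

theorem exists_iterate_next_toTree_eq_root (hf : f.IsRootedAt ⊤) (hw : w ∈ f.cycleLeaders) :
    ∃ n, f.toTree.next^[n] w = f.cycleLeaders.cyclicShift ⊤ := by
  induction w using WellFoundedLT.induction with
  | _ w ih =>
  by_cases hwr : w = f.cycleLeaders.cyclicShift ⊤
  · exact ⟨0, hwr⟩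
  obtain ⟨hw', hlt, hnext⟩ := next_toTree_of_mem hf hw hwr
  obtain ⟨t, ht⟩ := exists_iterate_next_toTree_eq hw'
  obtain ⟨n, hn⟩ := ih _ hlt hw'
  exact ⟨n + t + 1, by rw [iterate_add_apply, iterate_add_apply, iterate_one, hnext, ht, hn]⟩

theorem isTreeAt_toTree (hf : f.IsRootedAt ⊤) :
    f.toTree.IsTreeAt (f.cycleLeaders.cyclicShift ⊤) := by
  classical
  refine ⟨isRootedAt_toTree hf, fun v => ?_⟩
  have hex := exists_iterate_mem_periodicPts f.next v
  have hpath : f.toTree.next^[Nat.find hex] v = f.next^[Nat.find hex] v :=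
    iterate_eq_of_eqOn_compl eqOn_next_toTree
      fun i hi hL => Nat.find_min hex hi (mem_cycleLeaders.1 hL).1
  obtain ⟨t, hle, heq⟩ := exists_iterate_max_of_eqOn_compl
    (fun x hx => (mem_cycleLeaders.1 hx).2) eqOn_next_toTree
    (f.next^[Nat.find hex] v)
  have hc := mem_cycleLeaders.2
    ⟨(bijOn_periodicPts _).mapsTo.iterate t (Nat.find_spec hex), isOrbitMax_iterate_of_forall_le hle⟩
  obtain ⟨n, hn⟩ := exists_iterate_next_toTree_eq_root hf hc
  exact ⟨n + t + Nat.find hex, by rw [iterate_add_apply, iterate_add_apply, hpath, heq t le_rfl, hn]⟩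

theorem mapsTo_next_toTree (hf : f.IsRootedAt ⊤) :
    MapsTo f.toTree.next (periodicPts f.next) (periodicPts f.next) := by
  intro u hu
  by_cases huL : u ∈ f.cycleLeaders
  · by_cases hur : u = f.cycleLeaders.cyclicShift ⊤
    · rwa [hur, (isRootedAt_toTree hf).isFixedPt_next.eq, ← hur]
    · obtain ⟨hw, -, hnext⟩ := next_toTree_of_mem hf huL hur
      rw [hnext]
      exact (bijOn_periodicPts _).mapsTo (mem_cycleLeaders.1 hw).1
  · rw [eqOn_next_toTree huL]
    exact (bijOn_periodicPts _).mapsTo hu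

theorem mem_cycleLeaders_of_mem_pathLeaders_toTree (hf : f.IsRootedAt ⊤)
    (hv : v ∈ f.toTree.pathLeaders) : v ∈ f.cycleLeaders := by
  obtain ⟨⟨n, rfl⟩, hmax⟩ := mem_pathLeaders.1 hv
  exact mem_cycleLeaders.2 ⟨(mapsTo_next_toTree hf).iterate n
    (mem_cycleLeaders.1 (top_mem_cycleLeaders hf)).1,
    hmax.of_eqOn_compl (fun x hx => (mem_cycleLeaders.1 hx).2)
      eqOn_next_toTree⟩

theorem exists_iterate_next_toTree_top_eq (hf : f.IsRootedAt ⊤) (hw : w ∈ f.cycleLeaders) :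
    ∃ n, f.toTree.next^[n] ⊤ = w := by
  induction w using WellFoundedGT.induction with
  | _ w ih =>
  by_cases hwt : w = ⊤
  · exact ⟨0, hwt.symm⟩
  have hx := cyclicShift_mem_iff.2 hw
  have hwx := (cyclicShift_mem_Ioc hw (top_mem_cycleLeaders hf) (lt_top_iff_ne_top.2 hwt)).1
  obtain ⟨-, -, hnext⟩ :=
    next_toTree_of_mem hf hx (f.cycleLeaders.cyclicShift.injective.ne hwt)
  rw [Equiv.symm_apply_apply] at hnext
  obtain ⟨t, ht⟩ := exists_iterate_next_toTree_eq hw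
  obtain ⟨n, hn⟩ := ih _ hwx hx
  exact ⟨t + 1 + n, by rw [iterate_add_apply, iterate_add_apply, hn, iterate_one, hnext, ht]⟩

theorem isOrbitMax_next_toTree (hf : f.IsRootedAt ⊤) (hv : v ∈ f.cycleLeaders) :
    IsOrbitMax f.toTree.next v := by
  have hinv : MapsTo f.toTree.next {u | u ∈ periodicPts f.next ∧ ∀ i, f.next^[i] u ≤ v}
      {u | u ∈ periodicPts f.next ∧ ∀ i, f.next^[i] u ≤ v} := by
    rintro u ⟨hu, hle⟩
    refine ⟨mapsTo_next_toTree hf hu, ?_⟩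
    by_cases huL : u ∈ f.cycleLeaders
    · by_cases hur : u = f.cycleLeaders.cyclicShift ⊤
      · rwa [hur, (isRootedAt_toTree hf).isFixedPt_next.eq, ← hur]
      · obtain ⟨hw, hlt, hnext⟩ := next_toTree_of_mem hf huL hur
        intro i
        rw [hnext, ← iterate_succ_apply]
        exact ((mem_cycleLeaders.1 hw).2 _).trans (hlt.le.trans (hle 0))
    · intro i
      rw [eqOn_next_toTree huL, ← iterate_succ_apply]
      exact hle _
  exact fun n => (hinv.iterate n (mem_cycleLeaders.1 hv)).2 0

theorem pathLeaders_toTree (hf : f.IsRootedAt ⊤) : f.toTree.pathLeaders = f.cycleLeaders := by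
  ext v
  exact ⟨mem_cycleLeaders_of_mem_pathLeaders_toTree hf, fun hv =>
    mem_pathLeaders.2 ⟨exists_iterate_next_toTree_top_eq hf hv, isOrbitMax_next_toTree hf hv⟩⟩

theorem ofTree_toTree (hf : f.IsRootedAt ⊤) : f.toTree.ofTree = f := by
  rw [ofTree, pathLeaders_toTree hf, toTree, Function.comp_assoc, Equiv.symm_comp_self,
    Function.comp_id]

theorem label_toTree (hf : f.IsRootedAt ⊤) (v : V) :
    f.toTree.label v = f.label (f.cycleLeaders.cyclicShift.symm v) := by
  by_cases hvL : v ∈ f.cycleLeaders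
  · by_cases hvr : v = f.cycleLeaders.cyclicShift ⊤
    · simp [label, toTree, hvr, (hf ⊤).2 rfl]
    · obtain ⟨hw, hlt, -⟩ := next_toTree_of_mem hf hvL hvr
      obtain ⟨q, hq⟩ := Option.ne_none_iff_exists'.1 ((hf _).not.2 (hlt.trans_le le_top).ne)
      have hq1 : q.1 ≤ f.cycleLeaders.cyclicShift.symm v := by
        rw [← next_of_eq_some hq]
        exact (mem_cycleLeaders.1 hw).2 1
      simp [label, toTree, hq, not_lt.2 hq1, not_lt.2 (hq1.trans hlt.le)]
  · simp [label, toTree, cyclicShift_symm_apply_of_notMem hvL]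

theorem top_mem_pathLeaders : ⊤ ∈ g.pathLeaders :=
  mem_pathLeaders.2 ⟨⟨0, rfl⟩, isOrbitMax_top _⟩

theorem root_mem_pathLeaders (hg : g.IsTreeAt r) : r ∈ g.pathLeaders :=
  mem_pathLeaders.2 ⟨hg.2 ⊤, hg.1.isFixedPt_next.isOrbitMax⟩

theorem root_le_of_mem_pathLeaders (hg : g.IsTreeAt r) (hx : x ∈ g.pathLeaders) : r ≤ x := by
  obtain ⟨n, hn⟩ := hg.2 x
  exact hn ▸ (mem_pathLeaders.1 hx).2 n

theorem cyclicShift_pathLeaders_top (hg : g.IsTreeAt r) : g.pathLeaders.cyclicShift ⊤ = r := by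
  by_contra h
  have hx := cyclicShift_symm_mem_iff.2 (root_mem_pathLeaders hg)
  have hxt : g.pathLeaders.cyclicShift.symm r ≠ ⊤ := fun h' =>
    h (by rw [← h', Equiv.apply_symm_apply])
  have := (cyclicShift_mem_Ioc hx top_mem_pathLeaders (lt_top_iff_ne_top.2 hxt)).1
  rw [Equiv.apply_symm_apply] at this
  exact this.not_ge (root_le_of_mem_pathLeaders hg hx)

theorem isRootedAt_ofTree (hg : g.IsTreeAt r) : g.ofTree.IsRootedAt ⊤ := by
  have := hg.1.comp g.pathLeaders.cyclicShift
  rwa [← cyclicShift_pathLeaders_top hg, Equiv.symm_apply_apply] at this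

theorem next_ofTree_of_mem (hg : g.IsTreeAt r) (hx : x ∈ g.pathLeaders) (hxt : x ≠ ⊤) :
    g.pathLeaders.cyclicShift x ∈ g.pathLeaders ∧ x < g.pathLeaders.cyclicShift x ∧
      g.pathLeaders.cyclicShift x ≠ r ∧ g.ofTree.next x = g.next (g.pathLeaders.cyclicShift x) := by
  have hne : g.pathLeaders.cyclicShift x ≠ r := by
    rw [← cyclicShift_pathLeaders_top hg]
    exact g.pathLeaders.cyclicShift.injective.ne hxt
  exact ⟨cyclicShift_mem_iff.2 hx,
    (cyclicShift_mem_Ioc hx top_mem_pathLeaders (lt_top_iff_ne_top.2 hxt)).1, hne,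
    next_comp_of_ne_none _ ((hg.1 _).not.2 hne)⟩

theorem mapsTo_next_ofTree (hg : g.IsTreeAt r) :
    MapsTo g.ofTree.next {u | ∃ n, g.next^[n] ⊤ = u} {u | ∃ n, g.next^[n] ⊤ = u} := by
  rintro u ⟨n, rfl⟩
  by_cases huL : g.next^[n] ⊤ ∈ g.pathLeaders
  · by_cases hut : g.next^[n] ⊤ = ⊤
    · rw [hut, (isRootedAt_ofTree hg).isFixedPt_next.eq]
      exact ⟨0, rfl⟩
    · obtain ⟨hx, -, -, hnext⟩ := next_ofTree_of_mem hg huL hut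
      obtain ⟨m, hm⟩ := (mem_pathLeaders.1 hx).1
      exact ⟨m + 1, by rw [hnext, iterate_succ_apply', hm]⟩
  · exact ⟨n + 1, by rw [eqOn_next_ofTree huL, iterate_succ_apply']⟩

theorem mem_pathLeaders_of_mem_cycleLeaders_ofTree (hg : g.IsTreeAt r)
    (hv : v ∈ g.ofTree.cycleLeaders) : v ∈ g.pathLeaders := by
  obtain ⟨hper, hmax⟩ := mem_cycleLeaders.1 hv
  refine mem_pathLeaders.2 ⟨?_, hmax.of_eqOn_compl
    (fun x hx => (mem_pathLeaders.1 hx).2) eqOn_next_ofTree⟩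
  by_cases hmeet : ∃ i, g.ofTree.next^[i] v ∈ g.pathLeaders
  · obtain ⟨i, hi⟩ := hmeet
    obtain ⟨j, hj⟩ := exists_iterate_iterate_eq_of_mem_periodicPts hper i
    exact hj ▸ (mapsTo_next_ofTree hg).iterate j (mem_pathLeaders.1 hi).1
  · simp only [not_exists] at hmeet
    have hiter (n : ℕ) : g.next^[n] v = g.ofTree.next^[n] v :=
      iterate_eq_of_eqOn_compl eqOn_next_ofTree.symm
        fun i _ => hmeet i
    obtain ⟨p, hp, hpv⟩ := hper
    rw [hg.eq_of_mem_periodicPts ⟨p, hp, (hiter p).trans hpv⟩]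
    exact hg.2 ⊤

/-- `w` receives the parent edge of the next larger path leader `x`, and the path from `x` towards
the root first meets a path leader again at `w`: this closes a cycle with maximum `w`. -/
theorem exists_iterate_next_ofTree_eq (hg : g.IsTreeAt r) (hw : w ∈ g.pathLeaders) (hwt : w ≠ ⊤) :
    ∃ t, g.ofTree.next^[t + 1] w = w ∧ ∀ i ≤ t, g.ofTree.next^[i + 1] w ≤ w := by
  obtain ⟨hx, hwx, hxr, hnext⟩ := next_ofTree_of_mem hg hw hwt
  set x := g.pathLeaders.cyclicShift w
  obtain ⟨t, hle, heq⟩ := exists_iterate_max_of_eqOn_compl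
    (fun y hy => (mem_pathLeaders.1 hy).2) eqOn_next_ofTree (g.next x)
  suffices hc : g.next^[t] (g.next x) = w by
    refine ⟨t, ?_, fun i hi => ?_⟩
    · rw [iterate_succ_apply, hnext, heq t le_rfl, hc]
    · rw [iterate_succ_apply, hnext, heq i hi, ← hc]
      exact hle i
  obtain ⟨m, hm⟩ := (mem_pathLeaders.1 hx).1
  have hcx : g.next^[t + 1] x = g.next^[t] (g.next x) := iterate_succ_apply _ _ _
  have hcL : g.next^[t] (g.next x) ∈ g.pathLeaders := mem_pathLeaders.2
    ⟨⟨t + 1 + m, by rw [iterate_add_apply, hm, hcx]⟩, isOrbitMax_iterate_of_forall_le hle⟩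
  have hcx_lt : g.next^[t] (g.next x) < x := by
    refine lt_of_le_of_ne (hcx ▸ (mem_pathLeaders.1 hx).2 (t + 1)) fun hc => hxr ?_
    exact hg.eq_of_mem_periodicPts ⟨t + 1, t.succ_pos, hcx.trans hc⟩
  refine le_antisymm (not_lt.1 fun hlt => (cyclicShift_mem_Ioc hw hcL hlt).2.not_gt hcx_lt) ?_
  obtain ⟨a, ha⟩ := (mem_pathLeaders.1 hw).1
  rcases exists_iterate_eq_or_exists_iterate_eq ha hm with ⟨d, hd⟩ | ⟨_ | d, hd⟩
  · exact absurd (hd ▸ (mem_pathLeaders.1 hw).2 d) hwx.not_ge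
  · exact absurd hd hwx.ne'
  · rw [← hd, iterate_succ_apply]
    exact hle d

theorem cycleLeaders_ofTree (hg : g.IsTreeAt r) : g.ofTree.cycleLeaders = g.pathLeaders := by
  ext w
  refine ⟨mem_pathLeaders_of_mem_cycleLeaders_ofTree hg, fun hw => ?_⟩
  by_cases hwt : w = ⊤
  · exact hwt ▸ top_mem_cycleLeaders (isRootedAt_ofTree hg)
  obtain ⟨t, hper, hle⟩ := exists_iterate_next_ofTree_eq hg hw hwt
  refine mem_cycleLeaders.2 ⟨mk_mem_periodicPts t.succ_pos hper,
    IsPeriodicPt.isOrbitMax hper t.succ_pos fun i hi => ?_⟩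
  rcases i with _ | i
  · exact le_rfl
  · exact hle i (by omega)

theorem toTree_ofTree (hg : g.IsTreeAt r) : g.ofTree.toTree = g := by
  rw [toTree, cycleLeaders_ofTree hg, ofTree, Function.comp_assoc, Equiv.self_comp_symm,
    Function.comp_id]

noncomputable def toTreeEquiv :
    {f : ParentMap V C // Injective f ∧ f.IsRootedAt ⊤} ≃
      {g : ParentMap V C // Injective g ∧ ∃ r, g.IsTreeAt r} where
  toFun f := ⟨f.1.toTree, f.2.1.comp (Equiv.injective _), _, isTreeAt_toTree f.2.2⟩
  invFun g := ⟨g.1.ofTree, g.2.1.comp (Equiv.injective _),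
    g.2.2.elim fun _ hg => isRootedAt_ofTree hg⟩
  left_inv f := Subtype.ext (ofTree_toTree f.2.2)
  right_inv g := Subtype.ext (g.2.2.elim fun _ hg => toTree_ofTree hg)

theorem card_label_toTreeEquiv (f : {f : ParentMap V C // Injective f ∧ f.IsRootedAt ⊤})
    (ℓ : Option (C × Bool)) :
    Nat.card {v // (toTreeEquiv f).1.label v = ℓ} = Nat.card {v // f.1.label v = ℓ} :=
  Nat.card_congr <| Equiv.subtypeEquiv f.1.cycleLeaders.cyclicShift.symm fun v => by
    rw [toTreeEquiv, Equiv.coe_fn_mk, label_toTree f.2.2]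

end ParentMap

theorem Nat.card_subtype_castSucc {m : ℕ} {P : Fin m → Prop} {Q : Fin (m + 1) → Prop}
    (hlast : ¬Q (Fin.last m)) (h : ∀ i, Q i.castSucc ↔ P i) :
    Nat.card {i // P i} = Nat.card {v // Q v} :=
  Nat.card_congr <| ((finSuccAboveEquiv (Fin.last m)).subtypeEquiv fun i => by
    simp only [finSuccAboveEquiv_apply, Fin.succAbove_last, h]).trans (Equiv.subtypeSubtypeEquivSubtype fun hv h' => hlast (h' ▸ hv))

namespace ParentMap
variable {m : ℕ} {C : Type*}

def ofFin (g : Fin m → Fin (m + 1) × C) : ParentMap (Fin (m + 1)) C :=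
  Fin.lastCases none (some ∘ g)

@[simp]
theorem ofFin_castSucc (g : Fin m → Fin (m + 1) × C) (i : Fin m) :
    ofFin g i.castSucc = some (g i) :=
  Fin.lastCases_castSucc i

@[simp]
theorem ofFin_last (g : Fin m → Fin (m + 1) × C) : ofFin g (Fin.last m) = none :=
  Fin.lastCases_last

theorem isRootedAt_ofFin (g : Fin m → Fin (m + 1) × C) : (ofFin g).IsRootedAt ⊤ := by
  intro v
  induction v using Fin.lastCases <;> simp [Fin.top_eq_last, Fin.castSucc_ne_last]

theorem injective_ofFin {g : Fin m → Fin (m + 1) × C} (hg : Injective g) : Injective (ofFin g) := by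
  intro u v huv
  induction u using Fin.lastCases <;> induction v using Fin.lastCases <;> simp_all [hg.eq_iff]

noncomputable def ofFinEquiv :
    {g : Fin m → Fin (m + 1) × C // Injective g} ≃
      {f : ParentMap (Fin (m + 1)) C // Injective f ∧ f.IsRootedAt ⊤} :=
  Equiv.ofBijective (fun g => ⟨ofFin g.1, injective_ofFin g.2, isRootedAt_ofFin g.1⟩) <| by
    refine ⟨fun g g' h => Subtype.ext <| funext fun i => ?_, fun ⟨f, hinj, hroot⟩ => ?_⟩
    · simpa using congrFun (congrArg Subtype.val h) i.castSucc
    have hsome (i : Fin m) : (f i.castSucc).isSome :=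
      Option.isSome_iff_ne_none.2 ((hroot _).not.2 (by simp [Fin.top_eq_last]))
    refine ⟨⟨fun i => (f i.castSucc).get (hsome i), fun i i' h => ?_⟩, Subtype.ext <| funext
      fun v => ?_⟩
    · simpa using hinj (Option.get_inj.1 h)
    · induction v using Fin.lastCases
      · simpa [Fin.top_eq_last] using ((hroot _).2 rfl).symm
      · simp

theorem label_ofFin (g : Fin m → Fin (m + 1) × C) (i : Fin m) (ℓ : C × Bool) :
    (ofFin g).label i.castSucc = some ℓ ↔ (g i).2 = ℓ.1 ∧ (decide ((i : ℕ) < (g i).1)) = ℓ.2 := by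
  simp [label, Prod.ext_iff, Fin.lt_def]

theorem card_exc_ofFin (g : Fin m → Fin (m + 1) × C) (j : C) :
    Nat.card {i // (g i).2 = j ∧ (i : ℕ) < (g i).1} =
      Nat.card {v // (ofFin g).label v = some (j, true)} :=
  Nat.card_subtype_castSucc ((isRootedAt_ofFin g).ne_of_label_eq_some · (Fin.top_eq_last m))
    fun i => by simp [label_ofFin]

theorem card_sub_ofFin (g : Fin m → Fin (m + 1) × C) (j : C) :
    Nat.card {i // (g i).2 = j ∧ ((g i).1 : ℕ) ≤ i} =
      Nat.card {v // (ofFin g).label v = some (j, false)} :=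
  Nat.card_subtype_castSucc ((isRootedAt_ofFin g).ne_of_label_eq_some · (Fin.top_eq_last m))
    fun i => by simp [label_ofFin]

end ParentMap

namespace PlaneTree
open ParentMap
variable {n k : ℕ}

def toParentMap (T : PlaneTree n k) : ParentMap (Fin n) (Fin k) :=
  fun v => if h : v = T.root then none else some (T.par ⟨v, h⟩)

theorem toParentMap_of_ne (T : PlaneTree n k) {v : Fin n} (h : v ≠ T.root) :
    T.toParentMap v = some (T.par ⟨v, h⟩) :=
  dif_neg h

theorem isRootedAt_toParentMap (T : PlaneTree n k) : T.toParentMap.IsRootedAt T.root := by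
  intro v
  by_cases h : v = T.root <;> simp [toParentMap, h]

theorem next_toParentMap (T : PlaneTree n k) :
    T.toParentMap.next = fun u => if h : u = T.root then T.root else (T.par ⟨u, h⟩).1 := by
  funext u
  by_cases h : u = T.root
  · rw [dif_pos h, next_of_eq_none ((T.isRootedAt_toParentMap u).2 h), h]
  · rw [dif_neg h, next_of_eq_some (T.toParentMap_of_ne h)]

theorem isTreeAt_toParentMap (T : PlaneTree n k) : T.toParentMap.IsTreeAt T.root :=
  ⟨T.isRootedAt_toParentMap, by simpa only [next_toParentMap] using T.reach⟩

theorem injective_toParentMap (T : PlaneTree n k) : Injective T.toParentMap := by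
  intro u v huv
  by_cases hu : u = T.root <;> by_cases hv : v = T.root
  · rw [hu, hv]
  all_goals simp only [toParentMap, hu, hv, dite_false, dite_true, reduceCtorEq,
    Option.some.injEq] at huv
  exact congrArg Subtype.val (T.par_inj huv)

theorem toParentMap_injective : Injective (toParentMap : PlaneTree n k → _) := by
  intro T T' h
  have hroot : T.root = T'.root :=
    (T'.isRootedAt_toParentMap _).1 (by rw [← h]; exact (T.isRootedAt_toParentMap _).2 rfl)
  cases T with | mk r par _ _ =>
  cases T' with | mk r' par' _ _ =>
  obtain rfl : r = r' := hroot
  obtain rfl : par = par' := funext fun v => by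
    simpa [toParentMap, v.2] using congrFun h v.1
  rfl

theorem exists_toParentMap_eq {g : ParentMap (Fin n) (Fin k)} (hinj : Injective g) {r : Fin n}
    (hg : g.IsTreeAt r) : ∃ T : PlaneTree n k, T.toParentMap = g := by
  have hsome (v : {v // v ≠ r}) : (g v).isSome := Option.isSome_iff_ne_none.2 ((hg.1 _).not.2 v.2)
  let T : PlaneTree n k :=
    { root := r
      par := fun v => (g v).get (hsome v)
      par_inj := fun u v h => Subtype.ext (hinj (Option.get_inj.1 h))
      reach := fun v => by
        obtain ⟨m, hm⟩ := hg.2 v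
        refine ⟨m, ?_⟩
        convert hm using 2
        funext u
        by_cases h : u = r
        · rw [dif_pos h, h, hg.1.isFixedPt_next.eq]
        · rw [dif_neg h, next_of_eq_some (Option.some_get _).symm] }
  refine ⟨T, funext fun v => ?_⟩
  by_cases h : v = r
  · simpa [toParentMap, T, h] using ((hg.1 v).2 h).symm
  · simp [toParentMap, T, h]

noncomputable def equivParentMap :
    PlaneTree n k ≃ {g : ParentMap (Fin n) (Fin k) // Injective g ∧ ∃ r, g.IsTreeAt r} :=
  Equiv.ofBijective (fun T => ⟨T.toParentMap, T.injective_toParentMap, _, T.isTreeAt_toParentMap⟩)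
    ⟨fun _ _ h => toParentMap_injective (congrArg Subtype.val h),
      fun ⟨_, hinj, _, hg⟩ => (exists_toParentMap_eq hinj hg).imp fun _ => Subtype.ext⟩

theorem label_toParentMap (T : PlaneTree n k) (v : {v // v ≠ T.root}) (ℓ : Fin k × Bool) :
    T.toParentMap.label v = some ℓ ↔ (T.par v).2 = ℓ.1 ∧ decide (v.1 < (T.par v).1) = ℓ.2 := by
  simp [label, T.toParentMap_of_ne v.2, Prod.ext_iff]

theorem par_fst_ne (T : PlaneTree n k) (v : {v // v ≠ T.root}) : (T.par v).1 ≠ v.1 := fun h =>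
  v.2 <| T.isTreeAt_toParentMap.eq_of_mem_periodicPts <| mk_mem_periodicPts one_pos <|
    IsFixedPt.isPeriodicPt ((next_of_eq_some (T.toParentMap_of_ne v.2)).trans h) 1

theorem card_isDesc (T : PlaneTree n k) (j : Fin k) :
    Nat.card {v : {v // v ≠ T.root} // T.IsDesc j v} =
      Nat.card {v // T.toParentMap.label v = some (j, true)} :=
  Nat.card_congr <| (Equiv.subtypeEquivRight fun v => by simp [IsDesc, label_toParentMap]).trans
    (Equiv.subtypeSubtypeEquivSubtype T.isRootedAt_toParentMap.ne_of_label_eq_some)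

theorem card_isAsc (T : PlaneTree n k) (j : Fin k) :
    Nat.card {v : {v // v ≠ T.root} // T.IsAsc j v} =
      Nat.card {v // T.toParentMap.label v = some (j, false)} :=
  Nat.card_congr <| (Equiv.subtypeEquivRight fun v => by
    rw [label_toParentMap, IsAsc, ← Ne.le_iff_lt (T.par_fst_ne v)]
    simp).trans
    (Equiv.subtypeSubtypeEquivSubtype T.isRootedAt_toParentMap.ne_of_label_eq_some)

end PlaneTree

theorem card_exc_sub_eq_card_desc_asc_general (n k : ℕ) (hn : 2 ≤ n)
    (α β : Fin k → ℕ) :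
    Nat.card {g : Fin (n - 1) → Fin n × Fin k // Function.Injective g ∧
        ∀ j : Fin k,
          Nat.card {i : Fin (n - 1) //
            (g i).2 = j ∧ ((i : ℕ) < ((g i).1 : ℕ))} = α j ∧
          Nat.card {i : Fin (n - 1) //
            (g i).2 = j ∧ (((g i).1 : ℕ) ≤ (i : ℕ))} = β j} =
      Nat.card {T : PlaneTree n k //
        ∀ j : Fin k,
          Nat.card {v : {v : Fin n // v ≠ T.root} // T.IsDesc j v} = α j ∧
          Nat.card {v : {v : Fin n // v ≠ T.root} // T.IsAsc j v} = β j} := by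
  obtain ⟨m, rfl⟩ : ∃ m, n = m + 1 := ⟨n - 1, by omega⟩
  let HasCounts (f : ParentMap (Fin (m + 1)) (Fin k)) : Prop := ∀ j,
    Nat.card {v // f.label v = some (j, true)} = α j ∧
      Nat.card {v // f.label v = some (j, false)} = β j
  calc _ = Nat.card {f : {f : ParentMap _ _ // Injective f ∧ f.IsRootedAt ⊤} // HasCounts f.1} :=
        Nat.card_congr <| (Equiv.subtypeSubtypeEquivSubtypeInter _ _).symm.trans <|
          ParentMap.ofFinEquiv.subtypeEquiv fun g => by
            simp only [HasCounts, ParentMap.card_exc_ofFin, ParentMap.card_sub_ofFin]; rfl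
    _ = Nat.card {g : {g : ParentMap _ _ // Injective g ∧ ∃ r, g.IsTreeAt r} // HasCounts g.1} :=
        Nat.card_congr <| ParentMap.toTreeEquiv.subtypeEquiv fun f => by
          simp only [HasCounts, ParentMap.card_label_toTreeEquiv]
    _ = _ :=
        Nat.card_congr <| (PlaneTree.equivParentMap.subtypeEquiv fun T => by
          simp only [HasCounts, PlaneTree.card_isDesc, PlaneTree.card_isAsc]; rfl).symm

/-- for weak compositions `α, β : Fin k → ℕ` with
`∑ α + ∑ β = n - 1`, the number of injective functions
`g : {1,…,n-1} → {1,…,n} × {1,…,k}` with exactly `α j` many `j`-excedances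
and `β j` many `j`-subcedances for every `j` equals the number of labeled
rooted plane `k`-ary trees on `n` nodes with exactly `α j` many `j`-descents
and `β j` many `j`-ascents for every `j`.  (Here `i : Fin (n-1)` is a
`j`-excedance of `g` if `g i = (p, j)` with `p > i` as 1-based labels, i.e.
`(p : ℕ) > (i : ℕ)` for the 0-based encodings, and a `j`-subcedance
otherwise.) -/
theorem card_exc_sub_eq_card_desc_asc (n k : ℕ) (hn : 2 ≤ n) (hk : 2 ≤ k)
    (α β : Fin k → ℕ) (hαβ : (∑ j, α j) + (∑ j, β j) = n - 1) :
    Nat.card {g : Fin (n - 1) → Fin n × Fin k // Function.Injective g ∧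
        ∀ j : Fin k,
          Nat.card {i : Fin (n - 1) //
            (g i).2 = j ∧ ((i : ℕ) < ((g i).1 : ℕ))} = α j ∧
          Nat.card {i : Fin (n - 1) //
            (g i).2 = j ∧ (((g i).1 : ℕ) ≤ (i : ℕ))} = β j} =
      Nat.card {T : PlaneTree n k //
        ∀ j : Fin k,
          Nat.card {v : {v : Fin n // v ≠ T.root} // T.IsDesc j v} = α j ∧
          Nat.card {v : {v : Fin n // v ≠ T.root} // T.IsAsc j v} = β j} :=
  card_exc_sub_eq_card_desc_asc_general n k hn α β
end

section
/- For all integers n ≥ 2 and k ≥ 2, the number of labeled rooted plane k-ary trees on n nodes equals (kn)(kn−1)⋯(kn−n+2) = ∏_{i=0}^{n−2}(kn−i), i.e. the number of injective functions from {1,…,n−1} to {1,…,kn}. -/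
/-!
Pitman's double counting. Let `f j` be the number of plane `k`-ary forests on `n` labelled
vertices with `j` roots. Cutting the edge above a non-root vertex `v` of a forest with `j` roots
yields a forest with `j + 1` roots together with the freed slot `s` and the new root `v`, which
lies outside the tree containing the owner of `s`; grafting `v` back into `s` inverts this. A
forest with `j + 1` roots has `k n - (n - j - 1)` free slots and `j` admissible roots for each,
so `f j * (n - j) = f (j + 1) * (k n - (n - j - 1)) * j`. From `f n = 1` this gives
`f j = (n - 1).choose (j - 1) * ∏ i < n - j, (k n - i)`, and trees are the forests with one root.
-/

open Finset Relation

/-- Read `U x y` as "`y` is the parent of `x`"; then `U'` is `U` with the parent of `b` changed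
to `a`. -/
theorem WellFounded.graft {α : Type*} {U U' : α → α → Prop} (hU : WellFounded (flip U))
    {a b : α} (hab : ¬ ReflTransGen U a b)
    (hU' : ∀ x y, U' x y → x = b ∧ y = a ∨ x ≠ b ∧ U x y) : WellFounded (flip U') := by
  have away : ∀ v, ¬ ReflTransGen U v b → Acc (flip U') v := by
    intro v
    induction v using hU.induction with
    | _ v ih =>
      intro hv
      refine Acc.intro v fun y hy => ?_
      rcases hU' v y hy with ⟨rfl, -⟩ | ⟨-, hvy⟩
      · exact absurd .refl hv
      · exact ih y hvy fun hyb => hv (hyb.head hvy)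
  have hb : Acc (flip U') b := Acc.intro b fun y hy => by
    rcases hU' b y hy with ⟨-, rfl⟩ | ⟨hbb, -⟩
    · exact away y hab
    · exact absurd rfl hbb
  refine ⟨fun v => ?_⟩
  induction v using hU.induction with
  | _ v ih =>
    by_cases hvb : v = b
    · exact hvb ▸ hb
    · refine Acc.intro v fun y hy => ?_
      rcases hU' v y hy with ⟨hvb', -⟩ | ⟨-, hvy⟩
      · exact absurd hvb' hvb
      · exact ih y hvy

def IsChild {n k : ℕ} (par : Fin n → Option (Fin n × Fin k)) (v p : Fin n) : Prop :=
  ∃ i, par v = some (p, i)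

/-- Roots are the vertices with `par v = none`; `wf` says that every chain of parents ends. -/
@[ext]
structure PlaneForest (n k : ℕ) where
  par : Fin n → Option (Fin n × Fin k)
  par_inj : ∀ u v s, s ∈ par u → s ∈ par v → u = v
  wf : WellFounded (flip (IsChild par))

namespace PlaneForest

variable {n k : ℕ}

instance : Finite (PlaneForest n k) :=
  Finite.of_injective PlaneForest.par fun _ _ => PlaneForest.ext

noncomputable instance : Fintype (PlaneForest n k) := Fintype.ofFinite _

variable (F : PlaneForest n k)

def roots : Finset (Fin n) := {v | F.par v = none}

def edges : Finset ((Fin n × Fin k) × Fin n) := {e | F.par e.2 = some e.1}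

def slots : Finset (Fin n × Fin k) := F.edges.image Prod.fst

@[simp]
theorem mem_roots {v : Fin n} : v ∈ F.roots ↔ F.par v = none := by simp [roots]

@[simp]
theorem mem_edges {e : (Fin n × Fin k) × Fin n} : e ∈ F.edges ↔ F.par e.2 = some e.1 := by
  simp [edges]

theorem mem_slots {s : Fin n × Fin k} : s ∈ F.slots ↔ ∃ v, F.par v = some s := by
  simp [slots]

theorem card_edges : #F.edges = n - #F.roots := by
  have : #F.edges = #F.rootsᶜ := by
    refine card_nbij Prod.snd (fun e he => by simp_all) ?_ fun v hv => ?_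
    · rintro ⟨s, v⟩ hs ⟨s', v'⟩ hs' (rfl : v = v')
      simp_all
    · obtain ⟨s, hs⟩ := Option.ne_none_iff_exists'.1 (by simpa using hv)
      exact ⟨(s, v), by simpa using hs, rfl⟩
  rw [this, card_compl, Fintype.card_fin]

theorem card_slots : #F.slots = #F.edges :=
  card_image_of_injOn fun e he e' he' h =>
    Prod.ext h (F.par_inj _ _ _ (by simpa [h] using (mem_edges F).1 he) ((mem_edges F).1 he'))

theorem card_compl_slots : #F.slotsᶜ = k * n - (n - #F.roots) := by
  rw [card_compl, card_slots, card_edges, Fintype.card_prod, Fintype.card_fin, Fintype.card_fin,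
    mul_comm]

theorem isChild_rightUnique : Relator.RightUnique (IsChild F.par) := by
  rintro v p q ⟨i, hp⟩ ⟨j, hq⟩
  simp_all

theorem eq_of_reflTransGen_of_mem_roots {r v : Fin n} (hr : r ∈ F.roots)
    (h : ReflTransGen (IsChild F.par) r v) : r = v := by
  rcases h.cases_head with h | ⟨p, ⟨i, hp⟩, -⟩
  · exact h
  · simp_all

theorem exists_root_ancestor (v : Fin n) : ∃ r ∈ F.roots, ReflTransGen (IsChild F.par) v r := by
  induction v using F.wf.induction with
  | _ v ih =>
    cases h : F.par v with
    | none => exact ⟨v, by simpa using h, .refl⟩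
    | some s =>
      obtain ⟨r, hr, hsr⟩ := ih s.1 ⟨s.2, h⟩
      exact ⟨r, hr, hsr.head ⟨s.2, h⟩⟩

noncomputable def rootOf (v : Fin n) : Fin n := (F.exists_root_ancestor v).choose

theorem rootOf_mem_roots (v : Fin n) : F.rootOf v ∈ F.roots :=
  (F.exists_root_ancestor v).choose_spec.1

theorem reflTransGen_rootOf (v : Fin n) : ReflTransGen (IsChild F.par) v (F.rootOf v) :=
  (F.exists_root_ancestor v).choose_spec.2

theorem eq_rootOf {r v : Fin n} (hr : r ∈ F.roots) (h : ReflTransGen (IsChild F.par) v r) :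
    r = F.rootOf v := by
  rcases ReflTransGen.total_of_right_unique F.isChild_rightUnique h (F.reflTransGen_rootOf v)
    with h' | h'
  · exact F.eq_of_reflTransGen_of_mem_roots hr h'
  · exact (F.eq_of_reflTransGen_of_mem_roots (F.rootOf_mem_roots v) h').symm

/-- A free slot `s` and a root `r` that may be grafted into it. -/
noncomputable def links : Finset ((Fin n × Fin k) × Fin n) :=
  {e ∈ F.slotsᶜ ×ˢ F.roots | e.2 ≠ F.rootOf e.1.1}

theorem card_links : #F.links = #F.slotsᶜ * (#F.roots - 1) := by
  rw [links, card_filter, sum_product, ← sum_const_nat fun s _ => ?_]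
  rw [← card_filter]
  dsimp only
  rw [filter_ne', card_erase_of_mem (F.rootOf_mem_roots _)]

theorem isChild_of_isChild_update_none {par : Fin n → Option (Fin n × Fin k)} {v x y : Fin n}
    (h : IsChild (Function.update par v none) x y) : IsChild par x y := by
  obtain ⟨i, h⟩ := h
  rw [Function.update_apply] at h
  split_ifs at h
  exact ⟨i, h⟩

def cut (v : Fin n) : PlaneForest n k where
  par := Function.update F.par v none
  par_inj u w s hu hw := by
    simp only [Function.update_apply, Option.mem_def] at hu hw
    split_ifs at hu hw
    exact F.par_inj u w s hu hw
  wf := Subrelation.wf isChild_of_isChild_update_none F.wf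

theorem roots_cut (v : Fin n) : (F.cut v).roots = insert v F.roots := by
  ext u
  by_cases h : u = v <;> simp [cut, h]

def graft (s : Fin n × Fin k) (r : Fin n) (hs : s ∉ F.slots)
    (hr : ¬ ReflTransGen (IsChild F.par) s.1 r) : PlaneForest n k where
  par := Function.update F.par r (some s)
  par_inj u w s' hu hw := by
    simp only [Function.update_apply, Option.mem_def] at hu hw
    have free : ∀ v, F.par v ≠ some s := fun v hv => hs ((F.mem_slots).2 ⟨v, hv⟩)
    split_ifs at hu hw with hu' hw' hw'
    · exact hu'.trans hw'.symm
    · cases hu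
      exact absurd hw (free w)
    · cases hw
      exact absurd hu (free u)
    · exact F.par_inj u w s' hu hw
  wf := F.wf.graft hr fun x y ⟨i, h⟩ => by
    rw [Function.update_apply] at h
    split_ifs at h with hx
    · exact .inl ⟨hx, by rw [Option.some_inj.1 h]⟩
    · exact .inr ⟨hx, i, h⟩

theorem not_reflTransGen_of_isChild {v p : Fin n} (h : IsChild F.par v p) :
    ¬ ReflTransGen (IsChild F.par) p v := fun h' =>
  F.wf.transGen.irrefl.irrefl v (transGen_swap.2 (TransGen.head' h h'))

theorem mem_links_cut {s : Fin n × Fin k} {v : Fin n} (hv : F.par v = some s) :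
    (s, v) ∈ (F.cut v).links := by
  simp only [links, mem_filter, mem_product, mem_compl]
  refine ⟨⟨?_, by simp [roots_cut]⟩, fun h => F.not_reflTransGen_of_isChild ⟨s.2, hv⟩ ?_⟩
  · rw [mem_slots]
    rintro ⟨u, hu⟩
    simp only [cut, Function.update_apply] at hu
    split_ifs at hu with huv
    exact huv (F.par_inj u v s hu hv)
  · have := (F.cut v).reflTransGen_rootOf s.1
    rw [← h] at this
    exact ReflTransGen.mono (fun _ _ => isChild_of_isChild_update_none) _ _ this

theorem eq_of_cut_eq {F G : PlaneForest n k} {s : Fin n × Fin k} {v : Fin n}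
    (hF : F.par v = some s) (hG : G.par v = some s) (h : F.cut v = G.cut v) : F = G := by
  ext1
  funext u
  by_cases hu : u = v
  · rw [hu, hF, hG]
  · simpa [cut, hu] using congrFun (congrArg par h) u

theorem roots_graft {s : Fin n × Fin k} {r : Fin n} (hs : s ∉ F.slots)
    (hr : ¬ ReflTransGen (IsChild F.par) s.1 r) : (F.graft s r hs hr).roots = F.roots.erase r := by
  ext u
  by_cases h : u = r <;> simp [graft, h]

theorem cut_graft {s : Fin n × Fin k} {r : Fin n} (hs : s ∉ F.slots)
    (hr : ¬ ReflTransGen (IsChild F.par) s.1 r) (hroot : r ∈ F.roots) :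
    (F.graft s r hs hr).cut r = F := by
  ext1
  simp only [cut, graft, Function.update_idem]
  exact Function.update_eq_self_iff.2 ((F.mem_roots).1 hroot).symm

noncomputable def withRoots (n k j : ℕ) : Finset (PlaneForest n k) := {F | #F.roots = j}

@[simp]
theorem mem_withRoots {j : ℕ} {F : PlaneForest n k} : F ∈ withRoots n k j ↔ #F.roots = j := by
  simp [withRoots]

theorem card_sigma_edges_eq_card_sigma_links (j : ℕ) :
    #((withRoots n k j).sigma edges) = #((withRoots n k (j + 1)).sigma links) := by
  refine card_bij (fun x _ => ⟨x.1.cut x.2.2, x.2⟩) ?_ ?_ ?_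
  · rintro ⟨F, s, v⟩ hF
    simp only [mem_sigma, mem_withRoots, mem_edges] at hF ⊢
    refine ⟨?_, F.mem_links_cut hF.2⟩
    rw [roots_cut, card_insert_of_notMem (by simp [hF.2]), hF.1]
  · rintro ⟨F, s, v⟩ hF ⟨G, s', v'⟩ hG h
    simp only [Sigma.mk.injEq, heq_eq_eq, Prod.mk.injEq] at h
    obtain ⟨hcut, rfl, rfl⟩ := h
    simp only [mem_sigma, mem_edges] at hF hG
    rw [eq_of_cut_eq hF.2 hG.2 hcut]
  · rintro ⟨G, s, r⟩ hG
    simp only [mem_sigma, mem_withRoots, links, mem_filter, mem_product, mem_compl] at hG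
    obtain ⟨hj, ⟨hs, hr⟩, hne⟩ := hG
    have hsr : ¬ ReflTransGen (IsChild G.par) s.1 r := fun h => hne (G.eq_rootOf hr h)
    refine ⟨⟨G.graft s r hs hsr, (s, r)⟩, ?_, by simp only [G.cut_graft hs hsr hr]⟩
    simp only [mem_sigma, mem_withRoots, roots_graft, card_erase_of_mem hr, hj, mem_edges]
    simp [graft]

theorem card_withRoots_mul (j : ℕ) :
    #(withRoots n k j) * (n - j) = #(withRoots n k (j + 1)) * ((k * n - (n - (j + 1))) * j) := by
  have h := card_sigma_edges_eq_card_sigma_links (n := n) (k := k) j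
  rwa [card_sigma, card_sigma, sum_const_nat fun F hF => by rw [card_edges, mem_withRoots.1 hF],
    sum_const_nat fun F hF => by
      rw [card_links, card_compl_slots, mem_withRoots.1 hF, Nat.add_sub_cancel]] at h

theorem card_withRoots_self : #(withRoots n k n) = 1 := by
  refine card_eq_one.2 ⟨⟨fun _ => none, by simp, ⟨fun v => ⟨v, fun _ ⟨_, h⟩ => nomatch h⟩⟩⟩, ?_⟩
  ext F
  have : #F.roots = n ↔ F.roots = univ := by rw [← card_eq_iff_eq_univ, Fintype.card_fin]
  simp [this, PlaneForest.ext_iff, funext_iff, eq_univ_iff_forall]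

theorem card_withRoots {j : ℕ} (hj : 1 ≤ j) (hjn : j ≤ n) :
    #(withRoots n k j) = (n - 1).choose (j - 1) * ∏ i ∈ range (n - j), (k * n - i) := by
  induction hd : n - j generalizing j with
  | zero =>
    obtain rfl : j = n := by omega
    simp [card_withRoots_self]
  | succ d ih =>
    obtain ⟨j, rfl⟩ : ∃ j', j = j' + 1 := ⟨j - 1, by omega⟩
    have hrec := card_withRoots_mul (n := n) (k := k) (j + 1)
    have hchoose := Nat.choose_succ_right_eq (n - 1) j
    rw [ih (j := j + 1 + 1) (by omega) (by omega) (by omega), hd,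
      show n - (j + 1 + 1) = d by omega] at hrec
    rw [show n - 1 - j = d + 1 by omega] at hchoose
    apply Nat.eq_of_mul_eq_mul_right (show 0 < d + 1 by omega)
    rw [hrec, prod_range_succ, Nat.add_sub_cancel, Nat.add_sub_cancel]
    linear_combination (∏ i ∈ range d, (k * n - i)) * (k * n - d) * hchoose

end PlaneForest

namespace PlaneTree

variable {n k : ℕ} (t : PlaneTree n k)

def toForest : PlaneForest n k where
  par v := if h : v = t.root then none else some (t.par ⟨v, h⟩)
  par_inj u w s hu hw := by
    simp only [Option.mem_def] at hu hw
    split_ifs at hu hw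
    exact congrArg Subtype.val (t.par_inj (Option.some_inj.1 (hu.trans hw.symm)))
  wf := ⟨fun v => by
    obtain ⟨m, hm⟩ := t.reach v
    induction m generalizing v with
    | zero =>
      refine Acc.intro v fun p ⟨i, hp⟩ => ?_
      simp_all
    | succ m ih =>
      refine Acc.intro v fun p ⟨i, hp⟩ => ih p ?_
      rw [Function.iterate_succ_apply] at hm
      dsimp only at hp
      split_ifs at hp with h
      rwa [dif_neg h, Option.some_inj.1 hp] at hm⟩

theorem roots_toForest : t.toForest.roots = {t.root} := by
  ext v
  by_cases h : v = t.root <;> simp [toForest, h]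

theorem toForest_injective : Function.Injective (toForest (n := n) (k := k)) := by
  intro t t' h
  have hroot : t.root = t'.root := singleton_inj.1 <| by rw [← roots_toForest, h, roots_toForest]
  obtain ⟨r, par, _, _⟩ := t
  obtain ⟨r', par', _, _⟩ := t'
  obtain rfl : r = r' := hroot
  congr
  funext ⟨v, hv⟩
  simpa [toForest, hv] using congrFun (congrArg PlaneForest.par h) v

end PlaneTree

namespace PlaneForest

variable {n k : ℕ} (F : PlaneForest n k) {r : Fin n}

theorem isSome_par_of_ne (hr : F.roots = {r}) {v : Fin n} (hv : v ≠ r) : (F.par v).isSome := by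
  rw [Option.isSome_iff_ne_none]
  intro h
  exact hv (mem_singleton.1 (hr ▸ F.mem_roots.2 h))

def toTree (hr : F.roots = {r}) : PlaneTree n k where
  root := r
  par v := (F.par v).get (F.isSome_par_of_ne hr v.2)
  par_inj v w h := Subtype.ext <| F.par_inj v w _ (Option.get_mem _) (by
    simp only at h
    exact h.symm ▸ Option.get_mem _)
  reach v := by
    induction v using F.wf.induction with
    | _ v ih =>
      by_cases hv : v = r
      · exact ⟨0, hv⟩
      · obtain ⟨m, hm⟩ := ih _ ⟨_, (Option.some_get (F.isSome_par_of_ne hr hv)).symm⟩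
        exact ⟨m + 1, by rwa [Function.iterate_succ_apply, dif_neg hv]⟩

theorem toForest_toTree (hr : F.roots = {r}) : (F.toTree hr).toForest = F := by
  ext1
  funext v
  by_cases hv : v = r
  · have : F.par r = none := F.mem_roots.1 (by simp [hr])
    simp [PlaneTree.toForest, toTree, hv, this]
  · simp [PlaneTree.toForest, toTree, hv]

end PlaneForest

theorem card_planeTree_general (n k : ℕ) (hn : 2 ≤ n) :
    Nat.card (PlaneTree n k) = ∏ i ∈ Finset.range (n - 1), (k * n - i) := by
  have bij : Function.Bijective fun t : PlaneTree n k =>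
      (⟨t.toForest, by simp [t.roots_toForest]⟩ : PlaneForest.withRoots n k 1) := by
    refine ⟨fun t t' h => PlaneTree.toForest_injective (congrArg Subtype.val h), ?_⟩
    rintro ⟨F, hF⟩
    obtain ⟨r, hr⟩ := card_eq_one.1 (PlaneForest.mem_withRoots.1 hF)
    exact ⟨F.toTree hr, Subtype.ext (F.toForest_toTree hr)⟩
  rw [Nat.card_eq_of_bijective _ bij, Nat.card_eq_finsetCard,
    PlaneForest.card_withRoots le_rfl (by omega)]
  simp

/-- the number of labeled rooted plane `k`-ary trees on `n`
nodes equals `(kn)(kn-1)⋯(kn-n+2) = ∏_{i=0}^{n-2} (kn - i)`, the number of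
injective functions from `{1,…,n-1}` to `{1,…,kn}`. -/
theorem card_planeTree (n k : ℕ) (hn : 2 ≤ n) (hk : 2 ≤ k) :
    Nat.card (PlaneTree n k) = ∏ i ∈ Finset.range (n - 1), (k * n - i) :=
  card_planeTree_general n k hn
end

section
/- For all integers n ≥ 1 and k ≥ 2, the number of labeled rooted plane k-ary increasing trees on n nodes (those with no i-descents for any 1 ≤ i ≤ k, i.e. in which every child has a larger label than its parent) equals ∏_{i=1}^{n−1} (1 + i(k−1)). -/
/-- Auxiliary: injective maps `f : Fin m → ℕ × ℕ` with `(f i).1 ≤ i` and `(f i).2 < k`. -/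
def GoodFun (m k : ℕ) : Type :=
  {f : Fin m → ℕ × ℕ // Function.Injective f ∧ ∀ i : Fin m, (f i).1 ≤ (i : ℕ) ∧ (f i).2 < k}

instance GoodFun.finite (m k : ℕ) : Finite (GoodFun m k) := by
  apply Finite.of_injective (β := Fin m → Fin m × Fin k)
    (fun g i => (⟨(g.1 i).1, lt_of_le_of_lt (g.2.2 i).1 i.isLt⟩, ⟨(g.1 i).2, (g.2.2 i).2⟩))
  intro g1 g2 h
  apply Subtype.ext
  funext i
  have := congrFun h i
  simp only [Prod.mk.injEq, Fin.mk.injEq] at this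
  exact Prod.ext this.1 this.2

theorem card_goodFun (m k : ℕ) :
    Nat.card (GoodFun m k) = ∏ i ∈ Finset.range m, ((i + 1) * k - i) := by
  induction m with
  | zero =>
      rw [Finset.range_zero, Finset.prod_empty]
      rw [Nat.card_eq_one_iff_unique]
      constructor
      · exact ⟨fun a b => Subtype.ext (funext fun i => i.elim0)⟩
      · exact ⟨⟨fun i => i.elim0, fun a => a.elim0, fun i => i.elim0⟩⟩
  | succ m ih =>
      classical
      -- the finset of available pairs for the new last vertex
      set F : GoodFun m k → Finset (ℕ × ℕ) := fun g =>
        (Finset.range (m + 1) ×ˢ Finset.range k) \ Finset.image g.1 Finset.univ with hF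
      have himage : ∀ g : GoodFun m k,
          Finset.image g.1 Finset.univ ⊆ Finset.range (m + 1) ×ˢ Finset.range k := by
        intro g p hp
        rw [Finset.mem_image] at hp
        obtain ⟨i, -, rfl⟩ := hp
        rw [Finset.mem_product, Finset.mem_range, Finset.mem_range]
        exact ⟨lt_of_le_of_lt (g.2.2 i).1 (by omega), (g.2.2 i).2⟩
      have hcard : ∀ g : GoodFun m k, (F g).card = (m + 1) * k - m := by
        intro g
        rw [hF]
        rw [Finset.card_sdiff_of_subset (himage g), Finset.card_product, Finset.card_range,
          Finset.card_range, Finset.card_image_of_injective _ g.2.1,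
          Finset.card_univ, Fintype.card_fin]
      -- equivalence with a sigma type
      have e1 : GoodFun (m + 1) k ≃ Σ g : GoodFun m k, {p : ℕ × ℕ // p ∈ F g} := by
        refine ⟨fun f => ⟨⟨fun i => f.1 i.castSucc, ?_, ?_⟩, ⟨f.1 (Fin.last m), ?_⟩⟩,
          fun x => ⟨Fin.snoc x.1.1 x.2.1, ?_, ?_⟩, ?_, ?_⟩
        · exact fun a b hab => Fin.castSucc_injective m (f.2.1 hab)
        · exact fun i => ⟨(f.2.2 i.castSucc).1, (f.2.2 i.castSucc).2⟩
        · rw [hF, Finset.mem_sdiff, Finset.mem_product, Finset.mem_range, Finset.mem_range]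
          refine ⟨⟨?_, (f.2.2 (Fin.last m)).2⟩, ?_⟩
          · have := (f.2.2 (Fin.last m)).1; simp only [Fin.val_last] at this; omega
          · rw [Finset.mem_image]
            rintro ⟨i, -, hi⟩
            exact absurd (f.2.1 hi) (Fin.ne_last_of_lt (Fin.castSucc_lt_last i))
        · -- injectivity of snoc
          obtain ⟨⟨g, hginj, hgcond⟩, ⟨p, hp⟩⟩ := x
          rw [hF, Finset.mem_sdiff, Finset.mem_image] at hp
          intro a b hab
          rcases Fin.eq_castSucc_or_eq_last a with ⟨a', rfl⟩ | rfl <;>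
            rcases Fin.eq_castSucc_or_eq_last b with ⟨b', rfl⟩ | rfl <;>
            simp only [Fin.snoc_last, Fin.snoc_castSucc] at hab ⊢
          · exact congrArg Fin.castSucc (hginj hab)
          · exact absurd ⟨a', Finset.mem_univ _, hab⟩ hp.2
          · exact absurd ⟨b', Finset.mem_univ _, hab.symm⟩ hp.2
        · obtain ⟨⟨g, hginj, hgcond⟩, ⟨p, hp⟩⟩ := x
          rw [hF, Finset.mem_sdiff, Finset.mem_product, Finset.mem_range, Finset.mem_range] at hp
          intro i
          rcases Fin.eq_castSucc_or_eq_last i with ⟨i', rfl⟩ | rfl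
          · simp only [Fin.snoc_castSucc]
            exact ⟨le_trans (hgcond i').1 (by simp), (hgcond i').2⟩
          · simp only [Fin.snoc_last, Fin.val_last]
            exact ⟨by have := hp.1.1; omega, hp.1.2⟩
        · intro f
          apply Subtype.ext
          funext i
          rcases Fin.eq_castSucc_or_eq_last i with ⟨i', rfl⟩ | rfl <;> simp
        · rintro ⟨⟨g, hg⟩, ⟨p, hp⟩⟩
          have h1 : (⟨fun i => (Fin.snoc g p : Fin (m+1) → ℕ × ℕ) i.castSucc, by
              intro a b hab
              simp only [Fin.snoc_castSucc] at hab
              exact hg.1 hab, fun i => by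
              simp only [Fin.snoc_castSucc]; exact hg.2 i⟩ : GoodFun m k) = ⟨g, hg⟩ :=
            Subtype.ext (funext fun i => by simp)
          refine Sigma.ext ?_ ?_
          · exact h1
          · refine (Subtype.heq_iff_coe_eq ?_).mpr ?_
            · intro x; rw [show F _ = F ⟨g, hg⟩ from congrArg F h1]
            · simp
      have e2 : (Σ g : GoodFun m k, {p : ℕ × ℕ // p ∈ F g}) ≃
          GoodFun m k × Fin ((m + 1) * k - m) := by
        haveI : Fintype (GoodFun m k) := Fintype.ofFinite _
        refine (Equiv.sigmaCongrRight fun g => ?_).trans (Equiv.sigmaEquivProd _ _)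
        exact Fintype.equivFinOfCardEq (by rw [Fintype.card_coe, hcard g])
      rw [Nat.card_congr (e1.trans e2), Nat.card_prod, ih, Nat.card_eq_fintype_card,
        Fintype.card_fin, Finset.prod_range_succ]

/-- Encoding of an increasing tree as a function on `Fin (n-1)`. -/
def PlaneTree.code {n k : ℕ} (T : PlaneTree n k) (h0 : (T.root : ℕ) = 0)
    (i : Fin (n - 1)) : ℕ × ℕ :=
  let v : {v : Fin n // v ≠ T.root} :=
    ⟨⟨i.1 + 1, by have := i.isLt; omega⟩, fun h => by
      have := congrArg Fin.val h
      simp only [h0] at this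
      omega⟩
  ((T.par v).1.1, (T.par v).2.1)

/-- Parents for the tree decoded from a good function. -/
def parFun {n k : ℕ} (hn : 1 ≤ n) (g : GoodFun (n - 1) k)
    (v : {v : Fin n // v ≠ (⟨0, hn⟩ : Fin n)}) : Fin n × Fin k :=
  let i : Fin (n - 1) := ⟨v.1.1 - 1, by
    have h1 := v.1.isLt
    have h2 : v.1.1 ≠ 0 := fun h => v.2 (Fin.ext h)
    omega⟩
  (⟨(g.1 i).1, by have h1 := (g.2.2 i).1; have h2 := i.isLt; omega⟩,
   ⟨(g.1 i).2, (g.2.2 i).2⟩)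

theorem parFun_lt {n k : ℕ} (hn : 1 ≤ n) (g : GoodFun (n - 1) k)
    (v : {v : Fin n // v ≠ (⟨0, hn⟩ : Fin n)}) :
    ((parFun hn g v).1 : ℕ) < (v.1 : ℕ) := by
  have h2 : v.1.1 ≠ 0 := fun h => v.2 (Fin.ext h)
  have h1 := v.1.isLt
  have h3 : (g.1 ⟨v.1.1 - 1, by omega⟩).1 ≤ v.1.1 - 1 :=
    (g.2.2 ⟨v.1.1 - 1, by omega⟩).1
  have h4 : ((parFun hn g v).1 : ℕ) = (g.1 ⟨v.1.1 - 1, by omega⟩).1 := rfl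
  rw [h4]
  omega

/-- Decoding a good function into an increasing tree. -/
def ofGood {n k : ℕ} (hn : 1 ≤ n) (g : GoodFun (n - 1) k) : PlaneTree n k where
  root := ⟨0, hn⟩
  par := parFun hn g
  par_inj := by
    intro a b hab
    simp only [parFun, Prod.mk.injEq, Fin.mk.injEq] at hab
    have h2a : a.1.1 ≠ 0 := fun h => a.2 (Fin.ext h)
    have h2b : b.1.1 ≠ 0 := fun h => b.2 (Fin.ext h)
    have : (⟨a.1.1 - 1, by have := a.1.isLt; omega⟩ : Fin (n - 1)) =
        ⟨b.1.1 - 1, by have := b.1.isLt; omega⟩ :=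
      g.2.1 (Prod.ext hab.1 hab.2)
    have := congrArg Fin.val this
    exact Subtype.ext (Fin.ext (by simp only [] at this; omega))
  reach := by
    have key : ∀ (N : ℕ) (u : Fin n), u.1 < N → ∃ m : ℕ,
        (fun u : Fin n => if h : u = (⟨0, hn⟩ : Fin n) then (⟨0, hn⟩ : Fin n)
          else (parFun hn g ⟨u, h⟩).1)^[m] u = ⟨0, hn⟩ := by
      intro N
      induction N with
      | zero => intro u hu; omega
      | succ N ih =>
          intro u hu
          by_cases h : u = (⟨0, hn⟩ : Fin n)
          · exact ⟨0, h⟩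
          · obtain ⟨m, hm⟩ := ih (parFun hn g ⟨u, h⟩).1
              (by
                have hplt : ((parFun hn g ⟨u, h⟩).1 : ℕ) < (u : ℕ) := parFun_lt hn g ⟨u, h⟩
                omega)
            refine ⟨m + 1, ?_⟩
            rw [Function.iterate_succ_apply]
            show _^[m] (if h : u = (⟨0, hn⟩ : Fin n) then (⟨0, hn⟩ : Fin n)
                else (parFun hn g ⟨u, h⟩).1) = _
            rw [dif_neg h]
            exact hm
    exact fun v => key n v v.isLt

/-- the number of labeled rooted plane `k`-ary increasing trees
on `n` nodes (those with no `i`-descents for any `i`) equals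
`∏_{i=1}^{n-1} (1 + i(k-1))`. -/
theorem card_increasing_trees (n k : ℕ) (hn : 1 ≤ n) (hk : 2 ≤ k) :
    Nat.card {T : PlaneTree n k // ∀ (j : Fin k) v, ¬ T.IsDesc j v} =
      ∏ i ∈ Finset.Icc 1 (n - 1), (1 + i * (k - 1)) := by
  classical
  -- every non-root vertex has a strictly smaller parent
  have hlt : ∀ (T : PlaneTree n k), (∀ (j : Fin k) v, ¬ T.IsDesc j v) →
      ∀ v : {v : Fin n // v ≠ T.root}, ((T.par v).1 : ℕ) < (v.1 : ℕ) := by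
    intro T hT v
    have h1 : ¬ (v.1 < (T.par v).1) := fun h => hT (T.par v).2 v ⟨rfl, h⟩
    have h2 : (T.par v).1 ≠ v.1 := by
      intro heq
      obtain ⟨m, hm⟩ := T.reach v.1
      have hfix : ∀ m : ℕ, (fun u : Fin n => if h : u = T.root then T.root
          else (T.par ⟨u, h⟩).1)^[m] v.1 = v.1 := by
        intro m
        induction m with
        | zero => rfl
        | succ m ihm =>
            rw [Function.iterate_succ_apply', ihm]
            show (if h : v.1 = T.root then T.root else (T.par ⟨v.1, h⟩).1) = v.1
            rw [dif_neg v.2]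
            exact heq
      rw [hfix m] at hm
      exact v.2 hm
    rw [Fin.lt_def, not_lt] at h1
    have h3 : ((T.par v).1 : ℕ) ≠ (v.1 : ℕ) := fun h => h2 (Fin.ext h)
    omega
  -- the root is 0
  have h0 : ∀ T : {T : PlaneTree n k // ∀ (j : Fin k) v, ¬ T.IsDesc j v},
      ((T.1.root : ℕ) = 0) := by
    intro T
    by_contra h
    have := hlt T.1 T.2 ⟨⟨0, hn⟩, fun hh => h (congrArg Fin.val hh.symm)⟩
    simp only [] at this
    omega
  let φ : {T : PlaneTree n k // ∀ (j : Fin k) v, ¬ T.IsDesc j v} → GoodFun (n - 1) k :=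
    fun T => ⟨T.1.code (h0 T), by
      intro a b hab
      simp only [PlaneTree.code, Prod.mk.injEq] at hab
      have := T.1.par_inj (Prod.ext (Fin.ext hab.1) (Fin.ext hab.2))
      have := congrArg (fun v => ((v : {v : Fin n // v ≠ T.1.root}).1 : ℕ)) this
      simp only [] at this
      exact Fin.ext (by omega), by
      intro i
      refine ⟨?_, ?_⟩
      · have hv : ((T.1.code (h0 T) i).1 : ℕ) < i.1 + 1 := hlt T.1 T.2 _
        omega
      · exact ((T.1.par _).2).isLt⟩
  have hbij : Function.Bijective φ := by
    constructor
    · rintro ⟨T1, hT1⟩ ⟨T2, hT2⟩ h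
      have hr : T1.root = T2.root :=
        Fin.ext ((h0 ⟨T1, hT1⟩).trans (h0 ⟨T2, hT2⟩).symm)
      have hfun := congrFun (congrArg Subtype.val h)
      apply Subtype.ext
      obtain ⟨r1, p1, hi1, hre1⟩ := T1
      obtain ⟨r2, p2, hi2, hre2⟩ := T2
      simp only [] at hr
      subst hr
      simp only [PlaneTree.mk.injEq, heq_eq_eq, true_and]
      funext v
      have hv0 : (v.1 : ℕ) ≠ 0 := fun hz =>
        v.2 (Fin.ext (hz.trans (h0 ⟨⟨r1, p1, hi1, hre1⟩, hT1⟩).symm))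
      have hvlt := v.1.isLt
      have hi := hfun ⟨(v.1 : ℕ) - 1, by omega⟩
      simp only [φ, PlaneTree.code] at hi
      have hveq : ∀ (w : {u : Fin n // u ≠ r1}), (w.1 : ℕ) = (v.1 : ℕ) →
          p1 w = p1 v ∧ p2 w = p2 v := by
        intro w hw
        have : w = v := Subtype.ext (Fin.ext hw)
        rw [this]
        exact ⟨rfl, rfl⟩
      obtain ⟨e1, e2⟩ := hveq ⟨⟨(v.1 : ℕ) - 1 + 1, by omega⟩, fun hh => by
        have := congrArg Fin.val hh
        simp only [h0 ⟨⟨r1, p1, hi1, hre1⟩, hT1⟩] at this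
        omega⟩ (by simp only []; omega)
      rw [← e1, ← e2]
      simp only [Prod.mk.injEq] at hi
      exact Prod.ext (Fin.ext hi.1) (Fin.ext hi.2)
    · intro g
      refine ⟨⟨ofGood hn g, ?_⟩, ?_⟩
      · intro j v hd
        have := parFun_lt hn g v
        have := hd.2
        rw [Fin.lt_def] at this
        have : ((ofGood hn g).par v).1.1 < (v.1 : ℕ) := parFun_lt hn g v
        omega
      · apply Subtype.ext
        funext i
        simp only [φ, PlaneTree.code, ofGood, parFun]
        have hieq : (⟨i.1 + 1 - 1, by have := i.isLt; omega⟩ : Fin (n - 1)) = i :=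
          Fin.ext rfl
        rw [hieq]
  rw [Nat.card_eq_of_bijective φ hbij, card_goodFun]
  rw [← Finset.Ico_add_one_right_eq_Icc, Finset.prod_Ico_eq_prod_range]
  refine Finset.prod_congr rfl fun i _ => ?_
  obtain ⟨k', rfl⟩ : ∃ k', k = k' + 1 := ⟨k - 1, by omega⟩
  simp only [Nat.succ_sub_one]
  have h1 : (i + 1) * (k' + 1) = (i + 1) * k' + (i + 1) := by ring
  have h2 : (1 + i) * k' = (i + 1) * k' := by ring
  rw [h1, h2]
  set a := (i + 1) * k'
  omega
end

section
/- For every integer n ≥ 2, the following identity of polynomials in t with rational coefficients holds: ∑_{σ ∈ Π_{n−1}} μ(σ) ∏_{A ∈ σ} (t + n − 2 + min A) = (t + n − 1)^{n−1}, the sum being over all set partitions σ of {1,…,n−1}. (Both sides equal the factorial polynomial of the Shi board S_{0,n}, and (−1)^{n−1} times the characteristic polynomial of the extended Shi arrangement evaluated at 1−t.) -/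
open Polynomial

/-- The Möbius function value `μ(0̂, σ)` of a set partition `σ` in the
partition lattice: `∏_{A ∈ σ} (-1)^{|A|-1} (|A|-1)!`. -/
def partitionMu {m : ℕ} (σ : Finpartition (Finset.univ : Finset (Fin m))) : ℚ :=
  ∏ A ∈ σ.parts, (-1 : ℚ) ^ (A.card - 1) * ((A.card - 1).factorial : ℚ)

/-- The smallest element of a (nonempty) block of a set partition of
`{1,…,m}`, as a 1-based label. -/
def blockMin {m : ℕ} (σ : Finpartition (Finset.univ : Finset (Fin m)))
    (A : {A // A ∈ σ.parts}) : ℕ :=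
  (A.1.min' (σ.nonempty_of_mem_parts A.2)).1 + 1

/-!
Weight a block `A` of a set partition of a finite linearly ordered set `s` by
`(-1)^{|A|-1} (|A|-1)! x(min A)`. Then the sum over all partitions of `s` of the product of the
block weights is `∏_{a ∈ s} (x a - #{b ∈ s | b < a})`. Indeed, if `a` exceeds every element of
`s`, a partition of `insert a s` arises in exactly one way from a partition of `s`: either `{a}`
is added as a new block, contributing the factor `x a`, or `a` joins a block `A`, which keeps its
minimum and has its weight multiplied by `-|A|`. Summing over the blocks gives the factor
`x a - |s|`. For `s = {1,…,n-1}` and `x i = t + n - 2 + i` every factor equals `t + n - 1`.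
-/

open Finset

namespace Finpartition

variable {α : Type*} [DecidableEq α] {a : α} {s A : Finset α}

lemma notMem_of_mem_parts (P : Finpartition s) (ha : a ∉ s) (hA : A ∈ P.parts) : a ∉ A :=
  fun h => ha (P.le hA h)

lemma not_subset_singleton_of_mem_parts (P : Finpartition s) (ha : a ∉ s) (hA : A ∈ P.parts) :
    ¬ A ⊆ {a} := by
  rw [subset_singleton_iff]
  rintro (rfl | rfl)
  exacts [P.empty_notMem_parts hA, P.notMem_of_mem_parts ha hA (mem_singleton_self a)]

def insertSingleton (P : Finpartition s) (ha : a ∉ s) : Finpartition (insert a s) :=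
  P.extend (singleton_ne_empty a) (disjoint_singleton_right.mpr ha)
    (by rw [sup_eq_union, union_comm, ← insert_eq])

lemma insertSingleton_parts (P : Finpartition s) (ha : a ∉ s) :
    (P.insertSingleton ha).parts = insert {a} P.parts :=
  extend_parts _ _ _ _

def insertIntoPart (P : Finpartition s) (ha : a ∉ s) (hA : A ∈ P.parts) :
    Finpartition (insert a s) where
  parts := insert (insert a A) (P.parts.erase A)
  supIndep := by
    rw [supIndep_iff_pairwiseDisjoint, coe_insert]
    refine Set.PairwiseDisjoint.insert
      ((supIndep_iff_pairwiseDisjoint.mp P.supIndep).subset (coe_subset.mpr (erase_subset _ _)))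
      fun B hB _ => ?_
    obtain ⟨hBA, hB⟩ := mem_erase.mp hB
    exact disjoint_insert_left.mpr ⟨P.notMem_of_mem_parts ha hB, P.disjoint hA hB hBA.symm⟩
  sup_parts := by
    have hs : A ∪ (P.parts.erase A).sup id = s := by
      conv_rhs => rw [← P.sup_parts, ← insert_erase hA, sup_insert]
      rfl
    rw [sup_insert, id, sup_eq_union, insert_union, hs]
  bot_notMem := by
    rw [bot_eq_empty, mem_insert, not_or]
    exact ⟨(insert_ne_empty a A).symm, fun h => P.empty_notMem_parts (mem_of_mem_erase h)⟩

lemma insertIntoPart_parts (P : Finpartition s) (ha : a ∉ s) (hA : A ∈ P.parts) :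
    (P.insertIntoPart ha hA).parts = insert (insert a A) (P.parts.erase A) :=
  rfl

def eraseOfInsert (P : Finpartition (insert a s)) (ha : a ∉ s) : Finpartition s :=
  (P.avoid {a}).copy (by rw [sdiff_singleton_eq_erase, erase_insert ha])

lemma mem_eraseOfInsert_parts {P : Finpartition (insert a s)} {ha : a ∉ s} {B : Finset α} :
    B ∈ (P.eraseOfInsert ha).parts ↔ ∃ D ∈ P.parts, ¬ D ⊆ {a} ∧ D.erase a = B := by
  rw [eraseOfInsert, copy_parts, mem_avoid]
  simp only [sdiff_singleton_eq_erase]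

lemma eraseOfInsert_insertSingleton (P : Finpartition s) (ha : a ∉ s) :
    (P.insertSingleton ha).eraseOfInsert ha = P := by
  ext B
  rw [mem_eraseOfInsert_parts, insertSingleton_parts]
  constructor
  · rintro ⟨D, hD, hDa, rfl⟩
    obtain rfl | hD := mem_insert.mp hD
    · exact absurd subset_rfl hDa
    · rwa [erase_eq_of_notMem (P.notMem_of_mem_parts ha hD)]
  · intro hB
    exact ⟨B, mem_insert_of_mem hB, P.not_subset_singleton_of_mem_parts ha hB,
      erase_eq_of_notMem (P.notMem_of_mem_parts ha hB)⟩

lemma eraseOfInsert_insertIntoPart (P : Finpartition s) (ha : a ∉ s) (hA : A ∈ P.parts) :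
    (P.insertIntoPart ha hA).eraseOfInsert ha = P := by
  ext B
  rw [mem_eraseOfInsert_parts, insertIntoPart_parts]
  constructor
  · rintro ⟨D, hD, -, rfl⟩
    obtain rfl | hD := mem_insert.mp hD
    · rwa [erase_insert (P.notMem_of_mem_parts ha hA)]
    · have hD := mem_of_mem_erase hD
      rwa [erase_eq_of_notMem (P.notMem_of_mem_parts ha hD)]
  · intro hB
    obtain rfl | hBA := eq_or_ne B A
    · exact ⟨insert a B, mem_insert_self _ _,
        fun h => P.not_subset_singleton_of_mem_parts ha hB ((subset_insert a B).trans h),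
        erase_insert (P.notMem_of_mem_parts ha hB)⟩
    · exact ⟨B, mem_insert_of_mem (mem_erase.mpr ⟨hBA, hB⟩),
        P.not_subset_singleton_of_mem_parts ha hB,
        erase_eq_of_notMem (P.notMem_of_mem_parts ha hB)⟩

lemma singleton_mem_insertSingleton_parts (P : Finpartition s) (ha : a ∉ s) :
    {a} ∈ (P.insertSingleton ha).parts := by
  rw [insertSingleton_parts]
  exact mem_insert_self _ _

lemma singleton_notMem_insertIntoPart_parts (P : Finpartition s) (ha : a ∉ s)
    (hA : A ∈ P.parts) : {a} ∉ (P.insertIntoPart ha hA).parts := by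
  rw [insertIntoPart_parts, mem_insert, not_or]
  refine ⟨fun h => P.not_subset_singleton_of_mem_parts ha hA (h ▸ subset_insert a A), fun h => ?_⟩
  exact P.notMem_of_mem_parts ha (mem_of_mem_erase h) (mem_singleton_self a)

lemma insert_mem_insertIntoPart_parts_iff (P : Finpartition s) (ha : a ∉ s)
    {B : Finset α} (hA : A ∈ P.parts) (hB : B ∈ P.parts) :
    insert a B ∈ (P.insertIntoPart ha hA).parts ↔ B = A := by
  refine ⟨fun h => ?_, fun h => h ▸ mem_insert_self _ _⟩
  obtain h | h := mem_insert.mp h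
  · simpa [erase_insert (P.notMem_of_mem_parts ha hA),
      erase_insert (P.notMem_of_mem_parts ha hB)] using congrArg (erase · a) h
  · exact absurd (mem_insert_self a B) (P.notMem_of_mem_parts ha (mem_of_mem_erase h))

section eraseOfInsert

variable (τ : Finpartition (insert a s)) (ha : a ∉ s) {C : Finset α}

lemma mem_eraseOfInsert_parts_of_notMem (hC : C ∈ τ.parts) (haC : a ∉ C) :
    C ∈ (τ.eraseOfInsert ha).parts :=
  mem_eraseOfInsert_parts.mpr ⟨C, hC, fun h => haC <| by
    obtain rfl | rfl := subset_singleton_iff.mp h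
    exacts [absurd hC τ.empty_notMem_parts, mem_singleton_self a], erase_eq_of_notMem haC⟩

lemma notMem_of_mem_parts_of_ne_part {D : Finset α} (hD : D ∈ τ.parts) (hDa : D ≠ τ.part a) :
    a ∉ D :=
  fun h => hDa (τ.part_eq_of_mem hD h).symm

lemma insertSingleton_eraseOfInsert (h : τ.part a = {a}) :
    (τ.eraseOfInsert ha).insertSingleton ha = τ := by
  have hpart : τ.part a ∈ τ.parts := τ.part_mem.mpr (mem_insert_self a s)
  ext C
  rw [insertSingleton_parts, mem_insert]
  constructor
  · rintro (rfl | hC)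
    · exact h ▸ hpart
    · obtain ⟨D, hD, hDa, rfl⟩ := mem_eraseOfInsert_parts.mp hC
      have hD' : D ≠ τ.part a := fun hD' => hDa (hD' ▸ h ▸ subset_rfl)
      rwa [erase_eq_of_notMem (τ.notMem_of_mem_parts_of_ne_part hD hD')]
  · intro hC
    by_cases haC : a ∈ C
    · exact .inl (h ▸ (τ.part_eq_of_mem hC haC).symm)
    · exact .inr (τ.mem_eraseOfInsert_parts_of_notMem ha hC haC)

lemma erase_part_mem_eraseOfInsert_parts (h : τ.part a ≠ {a}) :
    (τ.part a).erase a ∈ (τ.eraseOfInsert ha).parts := by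
  have haa : a ∈ τ.part a := τ.mem_part_self.mpr (mem_insert_self a s)
  refine mem_eraseOfInsert_parts.mpr ⟨τ.part a, τ.part_mem.mpr (mem_insert_self a s), ?_, rfl⟩
  exact fun hsub => h ((Nonempty.subset_singleton_iff ⟨a, haa⟩).mp hsub)

lemma insertIntoPart_eraseOfInsert (h : τ.part a ≠ {a}) :
    (τ.eraseOfInsert ha).insertIntoPart ha (τ.erase_part_mem_eraseOfInsert_parts ha h) = τ := by
  have haa : a ∈ τ.part a := τ.mem_part_self.mpr (mem_insert_self a s)
  have hpart : τ.part a ∈ τ.parts := τ.part_mem.mpr (mem_insert_self a s)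
  ext C
  rw [insertIntoPart_parts, insert_erase haa, mem_insert, mem_erase]
  constructor
  · rintro (rfl | ⟨hCa, hC⟩)
    · exact hpart
    · obtain ⟨D, hD, -, rfl⟩ := mem_eraseOfInsert_parts.mp hC
      have hD' : D ≠ τ.part a := fun hD' => hCa (hD' ▸ rfl)
      rwa [erase_eq_of_notMem (τ.notMem_of_mem_parts_of_ne_part hD hD')]
  · intro hC
    by_cases haC : a ∈ C
    · exact .inl (τ.part_eq_of_mem hC haC).symm
    · refine .inr ⟨fun hCa => ?_, τ.mem_eraseOfInsert_parts_of_notMem ha hC haC⟩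
      obtain ⟨b, hb⟩ := τ.nonempty_of_mem_parts hC
      have hbC : b ∈ (τ.part a).erase a := hCa ▸ hb
      exact haC (τ.eq_of_mem_parts hpart hC (mem_of_mem_erase hbC) hb ▸ haa)

end eraseOfInsert

def insertElem (ha : a ∉ s) (p : Σ P : Finpartition s, Option P.parts) :
    Finpartition (insert a s) :=
  p.2.elim (p.1.insertSingleton ha) fun A => p.1.insertIntoPart ha A.2

lemma insertElem_bijective (ha : a ∉ s) : Function.Bijective (insertElem ha) := by
  refine ⟨?_, fun τ => ?_⟩
  · rintro ⟨P, _ | ⟨A, hA⟩⟩ ⟨Q, _ | ⟨B, hB⟩⟩ h <;> simp only [insertElem, Option.elim] at h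
    · obtain rfl : P = Q := by
        simpa only [eraseOfInsert_insertSingleton] using congrArg (eraseOfInsert · ha) h
      rfl
    · exact absurd (h ▸ P.singleton_mem_insertSingleton_parts ha)
        (Q.singleton_notMem_insertIntoPart_parts ha hB)
    · exact absurd (h ▸ Q.singleton_mem_insertSingleton_parts ha)
        (P.singleton_notMem_insertIntoPart_parts ha hA)
    · obtain rfl : P = Q := by
        simpa only [eraseOfInsert_insertIntoPart] using congrArg (eraseOfInsert · ha) h
      obtain rfl : A = B := (P.insert_mem_insertIntoPart_parts_iff ha hB hA).mp
        (h ▸ mem_insert_self _ _)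
      rfl
  · by_cases h : τ.part a = {a}
    · exact ⟨⟨τ.eraseOfInsert ha, none⟩, τ.insertSingleton_eraseOfInsert ha h⟩
    · exact ⟨⟨τ.eraseOfInsert ha, some ⟨_, τ.erase_part_mem_eraseOfInsert_parts ha h⟩⟩,
        τ.insertIntoPart_eraseOfInsert ha h⟩

lemma sum_univ_insert {M : Type*} [AddCommMonoid M] (ha : a ∉ s)
    (f : Finpartition (insert a s) → M) :
    ∑ τ, f τ = ∑ P : Finpartition s,
      (f (P.insertSingleton ha) + ∑ A : P.parts, f (P.insertIntoPart ha A.2)) := by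
  rw [← (insertElem_bijective ha).sum_comp, ← univ_sigma_univ, sum_sigma]
  simp only [Fintype.sum_option]
  rfl

end Finpartition

section blockWeight

variable {α R : Type*} [LinearOrder α] [CommRing R]

def blockWeight (x : α → R) (A : Finset α) : R :=
  (-1) ^ (#A - 1) * (#A - 1).factorial * if h : A.Nonempty then x (A.min' h) else 1

lemma blockWeight_singleton (x : α → R) (a : α) : blockWeight x {a} = x a := by
  simp [blockWeight]

lemma blockWeight_insert_of_forall_lt (x : α → R) {a : α} {A : Finset α} (hA : A.Nonempty)
    (h : ∀ b ∈ A, b < a) : blockWeight x (insert a A) = -#A * blockWeight x A := by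
  have hmin : (insert a A).min' (insert_nonempty a A) = A.min' hA := by
    rw [min'_insert a A hA, min_eq_right (h _ (A.min'_mem hA)).le]
  obtain ⟨k, hk⟩ : ∃ k, #A = k + 1 := ⟨#A - 1, (Nat.succ_pred_eq_of_pos hA.card_pos).symm⟩
  rw [blockWeight, blockWeight, dif_pos (insert_nonempty a A), dif_pos hA, hmin,
    card_insert_of_notMem fun ha => (h a ha).false, hk, Nat.add_sub_cancel, Nat.add_sub_cancel,
    Nat.factorial_succ]
  push_cast
  ring

variable {a : α} {s : Finset α}

lemma prod_blockWeight_insertSingleton (x : α → R) (P : Finpartition s) (ha : a ∉ s) :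
    ∏ B ∈ (P.insertSingleton ha).parts, blockWeight x B = x a * ∏ B ∈ P.parts, blockWeight x B := by
  rw [Finpartition.insertSingleton_parts, prod_insert, blockWeight_singleton]
  exact fun h => P.notMem_of_mem_parts ha h (mem_singleton_self a)

lemma prod_blockWeight_insertIntoPart (x : α → R) (P : Finpartition s) (hs : ∀ b ∈ s, b < a)
    {A : Finset α} (hA : A ∈ P.parts) :
    ∏ B ∈ (P.insertIntoPart (fun ha => (hs a ha).false) hA).parts, blockWeight x B =
      -#A * ∏ B ∈ P.parts, blockWeight x B := by
  rw [Finpartition.insertIntoPart_parts, prod_insert, ← mul_prod_erase _ _ hA,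
    blockWeight_insert_of_forall_lt x (P.nonempty_of_mem_parts hA) fun b hb => hs b (P.le hA hb),
    mul_assoc]
  exact fun h => P.notMem_of_mem_parts (fun ha => (hs a ha).false) (mem_of_mem_erase h)
    (mem_insert_self a A)

end blockWeight

theorem sum_prod_blockWeight {α R : Type*} [LinearOrder α] [CommRing R] (x : α → R)
    (s : Finset α) :
    ∑ P : Finpartition s, ∏ A ∈ P.parts, blockWeight x A = ∏ a ∈ s, (x a - #{b ∈ s | b < a}) := by
  induction s using Finset.induction_on_max with
  | empty =>
    have : Unique (Finpartition (∅ : Finset α)) := inferInstanceAs (Unique (Finpartition ⊥))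
    rw [Fintype.sum_unique, Finpartition.parts_eq_empty_iff.mpr rfl, prod_empty, prod_empty]
  | insert a s hs ih =>
    have ha : a ∉ s := fun ha => (hs a ha).false
    have hfilter_self : {b ∈ insert a s | b < a} = s := by
      rw [filter_insert, if_neg (lt_irrefl a), filter_true_of_mem hs]
    have hfilter : ∀ c ∈ s, {b ∈ insert a s | b < c} = {b ∈ s | b < c} := fun c hc => by
      rw [filter_insert, if_neg (hs c hc).asymm]
    calc ∑ τ : Finpartition (insert a s), ∏ B ∈ τ.parts, blockWeight x B
        = ∑ P : Finpartition s, (x a - #s) * ∏ B ∈ P.parts, blockWeight x B := by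
          rw [Finpartition.sum_univ_insert ha]
          refine sum_congr rfl fun P _ => ?_
          simp only [prod_blockWeight_insertSingleton, prod_blockWeight_insertIntoPart x P hs]
          rw [sum_coe_sort P.parts fun A => -(#A : R) * ∏ B ∈ P.parts, blockWeight x B,
            ← sum_mul, sum_neg_distrib, ← Nat.cast_sum, P.sum_card_parts]
          ring
      _ = ∏ c ∈ insert a s, (x c - #{b ∈ insert a s | b < c}) := by
          rw [← mul_sum, ih, prod_insert ha, hfilter_self]
          exact congrArg _ (prod_congr rfl fun c hc => by rw [hfilter c hc])

lemma map_partitionMu_mul_prod {R : Type*} [CommRing R] (φ : ℚ →+* R) {m : ℕ}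
    (σ : Finpartition (univ : Finset (Fin m))) (f : ℕ → R) :
    φ (partitionMu σ) * ∏ A ∈ σ.parts.attach, f (blockMin σ A) =
      ∏ A ∈ σ.parts, blockWeight (fun i : Fin m => f (i + 1)) A := by
  rw [partitionMu, map_prod, ← prod_attach σ.parts, ← prod_attach σ.parts, ← prod_mul_distrib]
  refine prod_congr rfl fun A _ => ?_
  rw [blockWeight, dif_pos (σ.nonempty_of_mem_parts A.2), blockMin]
  simp

theorem shi_characteristic_partition_sum_general (n : ℕ) :
    ∑ σ : Finpartition (Finset.univ : Finset (Fin (n - 1))),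
        C (partitionMu σ) *
          ∏ A ∈ σ.parts.attach, (X + C ((n : ℚ) - 2 + blockMin σ A)) =
      (X + C ((n : ℚ) - 1)) ^ (n - 1) := by
  simp only [map_partitionMu_mul_prod C _ fun k => X + C ((n : ℚ) - 2 + k)]
  rw [sum_prod_blockWeight, ← Fin.prod_const]
  refine prod_congr rfl fun i _ => ?_
  rw [filter_gt_eq_Iio, Fin.card_Iio, ← map_natCast C, add_sub_assoc, ← C_sub]
  congr 2
  push_cast
  ring

/-- as polynomials in `t` over `ℚ`,
`∑_{σ ∈ Π_{n-1}} μ(σ) ∏_{A ∈ σ} (t + n - 2 + min A) = (t + n - 1)^{n-1}`,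
the sum being over all set partitions of `{1,…,n-1}`. -/
theorem shi_characteristic_partition_sum (n : ℕ) (hn : 2 ≤ n) :
    ∑ σ : Finpartition (Finset.univ : Finset (Fin (n - 1))),
        C (partitionMu σ) *
          ∏ A ∈ σ.parts.attach, (X + C ((n : ℚ) - 2 + blockMin σ A)) =
      (X + C ((n : ℚ) - 1)) ^ (n - 1) :=
  shi_characteristic_partition_sum_general n
end
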